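/- arXiv:2507.03426 — 7 statements merged into one kernel-verified Lean document; each statement's English description precedes it below -/
import Mathlib

section
/- Let X be a nonempty set and let E : F(X) → [0,∞] be convex with E(0) = 0. Then E is lower semicontinuous with respect to pointwise convergence if and only if for some (equivalently, for every) 1 ≤ p < ∞ one has E = sup { E_p^{(α,K)} : K ⊆ X finite, α > 0 }, where E_p^{(α,K)}(f) = inf { E(g) + α·Σ_{x∈K} |f(x) − g(x)|^p : g ∈ F(X) }. -/
open scoped ENNReal NNReal Topology

noncomputable section

/-- A `[0,∞]`-valued functional on a real vector space is convex. -/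
def ConvexENNReal {W : Type*} [AddCommGroup W] [Module ℝ W] (ρ : W → ℝ≥0∞) : Prop :=
  ∀ (x y : W) (a b : ℝ), 0 ≤ a → 0 ≤ b → a + b = 1 →
    ρ (a • x + b • y) ≤ ENNReal.ofReal a * ρ x + ENNReal.ofReal b * ρ y

/-- The modular cone `M(ρ) = {λ • x : λ ≥ 0, ρ x < ∞}`. -/
def modularCone {W : Type*} [AddCommGroup W] [Module ℝ W] (ρ : W → ℝ≥0∞) : Set W :=
  {x | ∃ (lam : ℝ) (y : W), 0 ≤ lam ∧ ρ y ≠ ⊤ ∧ x = lam • y}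

/-- The Luxemburg functional `‖x‖_L = inf {λ > 0 : ρ (λ⁻¹ x) ≤ 1}` (equal to `∞` outside
the modular cone, where no admissible `λ` exists). -/
noncomputable def luxemburg {W : Type*} [AddCommGroup W] [Module ℝ W]
    (ρ : W → ℝ≥0∞) (x : W) : ℝ≥0∞ :=
  ⨅ (lam : ℝ) (_ : 0 < lam) (_ : ρ (lam⁻¹ • x) ≤ 1), ENNReal.ofReal lam

/-- The approximating functional
`E_p^{(α,K)}(f) = inf_g ( E g + α ∑_{x ∈ K} |f x − g x|^p )`. -/
noncomputable def approxForm {X : Type*} (E : (X → ℝ) → ℝ≥0∞) (p α : ℝ) (K : Finset X)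
    (f : X → ℝ) : ℝ≥0∞ :=
  ⨅ g : X → ℝ, E g + ENNReal.ofReal (α * ∑ x ∈ K, |f x - g x| ^ p)

section AuxLemmas

variable {X : Type*}

lemma aux_add_rpow_le (p : ℝ) (hp : 1 ≤ p) {a b : ℝ} (ha : 0 ≤ a) (hb : 0 ≤ b) :
    (a + b) ^ p ≤ 2 ^ (p - 1) * (a ^ p + b ^ p) := by
  have h2 := NNReal.coe_le_coe.2 (NNReal.rpow_add_le_mul_rpow_add_rpow a.toNNReal b.toNNReal hp)
  push_cast at h2
  simpa [Real.coe_toNNReal a ha, Real.coe_toNNReal b hb] using h2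

lemma approxForm_le_self (E : (X → ℝ) → ℝ≥0∞) {p : ℝ} (hp : 1 ≤ p) (α : ℝ) (K : Finset X)
    (f : X → ℝ) : approxForm E p α K f ≤ E f := by
  have hp0 : p ≠ 0 := by intro h; rw [h] at hp; linarith
  have h := iInf_le (fun g : X → ℝ => E g + ENNReal.ofReal (α * ∑ x ∈ K, |f x - g x| ^ p)) f
  simpa [approxForm, Real.zero_rpow hp0] using h

lemma approxForm_le_ofReal (E : (X → ℝ) → ℝ≥0∞) (h0 : E 0 = 0) (p α : ℝ) (K : Finset X)
    (f : X → ℝ) : approxForm E p α K f ≤ ENNReal.ofReal (α * ∑ x ∈ K, |f x| ^ p) := by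
  have h := iInf_le (fun g : X → ℝ => E g + ENNReal.ofReal (α * ∑ x ∈ K, |f x - g x| ^ p)) 0
  simpa [approxForm, h0] using h

lemma approxForm_key (E : (X → ℝ) → ℝ≥0∞) {p : ℝ} (hp : 1 ≤ p) {α : ℝ} (hα : 0 < α)
    (K : Finset X) (f f₀ : X → ℝ) :
    approxForm E p α K f₀ ≤ approxForm E p (2 ^ (p - 1) * α) K f
      + ENNReal.ofReal (2 ^ (p - 1) * α * ∑ x ∈ K, |f x - f₀ x| ^ p) := by
  simp only [approxForm]
  rw [ENNReal.iInf_add]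
  refine le_iInf fun g => ?_
  refine le_trans (iInf_le _ g) ?_
  rw [add_assoc]
  refine add_le_add le_rfl ?_
  have hterm : ∀ x ∈ K, |f₀ x - g x| ^ p ≤ 2 ^ (p - 1) * (|f x - g x| ^ p + |f x - f₀ x| ^ p) := by
    intro x _
    have htri : |f₀ x - g x| ≤ |f x - g x| + |f x - f₀ x| := by
      have he : f₀ x - g x = (f x - g x) - (f x - f₀ x) := by ring
      rw [he]; exact abs_sub _ _
    calc |f₀ x - g x| ^ p ≤ (|f x - g x| + |f x - f₀ x|) ^ p :=
          Real.rpow_le_rpow (abs_nonneg _) htri (by linarith)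
      _ ≤ _ := aux_add_rpow_le p hp (abs_nonneg _) (abs_nonneg _)
  have hsum : α * ∑ x ∈ K, |f₀ x - g x| ^ p ≤
      2 ^ (p - 1) * α * (∑ x ∈ K, |f x - g x| ^ p) +
        2 ^ (p - 1) * α * ∑ x ∈ K, |f x - f₀ x| ^ p := by
    have h1 : ∑ x ∈ K, |f₀ x - g x| ^ p ≤
        ∑ x ∈ K, 2 ^ (p - 1) * (|f x - g x| ^ p + |f x - f₀ x| ^ p) :=
      Finset.sum_le_sum hterm
    have h2 : ∑ x ∈ K, 2 ^ (p - 1) * (|f x - g x| ^ p + |f x - f₀ x| ^ p)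
        = 2 ^ (p - 1) * ((∑ x ∈ K, |f x - g x| ^ p) + ∑ x ∈ K, |f x - f₀ x| ^ p) := by
      rw [← Finset.sum_add_distrib, Finset.mul_sum]
    calc α * ∑ x ∈ K, |f₀ x - g x| ^ p
        ≤ α * (2 ^ (p - 1) * ((∑ x ∈ K, |f x - g x| ^ p) + ∑ x ∈ K, |f x - f₀ x| ^ p)) :=
          mul_le_mul_of_nonneg_left (h1.trans_eq h2) hα.le
      _ = _ := by ring
  calc ENNReal.ofReal (α * ∑ x ∈ K, |f₀ x - g x| ^ p)
      ≤ ENNReal.ofReal (2 ^ (p - 1) * α * (∑ x ∈ K, |f x - g x| ^ p)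
          + 2 ^ (p - 1) * α * ∑ x ∈ K, |f x - f₀ x| ^ p) := ENNReal.ofReal_le_ofReal hsum
    _ ≤ _ := ENNReal.ofReal_add_le

end AuxLemmas

/-- **Approximation via finite subsets** (Theorem 3.13): `E` is lower semicontinuous with
respect to pointwise convergence iff for some/any `1 ≤ p < ∞` it is the supremum of its
approximating functionals. -/
theorem lsc_iff_sup_of_approx {X : Type*} [Nonempty X] (E : (X → ℝ) → ℝ≥0∞)
    (hconv : ConvexENNReal E) (h0 : E 0 = 0) :
    ∀ p : ℝ, 1 ≤ p →
      (LowerSemicontinuous E ↔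
        ∀ f : X → ℝ, E f = ⨆ (K : Finset X) (α : ℝ) (_ : 0 < α), approxForm E p α K f) := by
  intro p hp
  have hppos : (0 : ℝ) < p := lt_of_lt_of_le one_pos hp
  constructor
  · -- LSC implies the sup formula
    intro hlsc f
    refine le_antisymm ?_
      (iSup_le fun K => iSup_le fun α => iSup_le fun _ => approxForm_le_self E hp α K f)
    by_contra hlt
    rw [not_le] at hlt
    obtain ⟨y, hSy, hyE⟩ := exists_between hlt
    obtain ⟨y', hSy', hy'y⟩ := exists_between hSy
    have hy'top : y' ≠ ⊤ := ne_top_of_lt hy'y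
    have hev : ∀ᶠ g in 𝓝 f, y < E g := hlsc f y hyE
    rw [nhds_pi] at hev
    obtain ⟨I, hIfin, t, htmem, htsub⟩ := Filter.mem_pi.1 hev
    have hball : ∀ x : X, ∃ ε : ℝ, 0 < ε ∧ Metric.ball (f x) ε ⊆ t x := fun x =>
      Metric.mem_nhds_iff.1 (htmem x)
    choose ε hεpos hεball using hball
    set K : Finset X := hIfin.toFinset with hK
    obtain ⟨δ, hδpos, hδle⟩ : ∃ δ : ℝ, 0 < δ ∧ ∀ x ∈ K, δ ≤ ε x := by
      rcases K.eq_empty_or_nonempty with h | h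
      · exact ⟨1, one_pos, by simp [h]⟩
      · obtain ⟨x₀, _, hmin⟩ := K.exists_min_image ε h
        exact ⟨ε x₀, hεpos x₀, fun x hx => hmin x hx⟩
    have hδp : (0 : ℝ) < δ ^ p := Real.rpow_pos_of_pos hδpos p
    set α : ℝ := y'.toReal / δ ^ p + 1 with hαdef
    have hαpos : 0 < α := by positivity
    have h1 : approxForm E p α K f ≤
        ⨆ (K : Finset X) (α : ℝ) (_ : 0 < α), approxForm E p α K f :=
      le_iSup_of_le K (le_iSup_of_le α (le_iSup_of_le hαpos le_rfl))
    have happ : approxForm E p α K f < y' := h1.trans_lt hSy'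
    simp only [approxForm] at happ
    obtain ⟨g, hg⟩ := iInf_lt_iff.1 happ
    have hEg : E g < y' := le_self_add.trans_lt hg
    have hcost : ENNReal.ofReal (α * ∑ x ∈ K, |f x - g x| ^ p) < y' := le_add_self.trans_lt hg
    have hsum_nonneg : ∀ x ∈ K, (0 : ℝ) ≤ |f x - g x| ^ p := fun x _ =>
      Real.rpow_nonneg (abs_nonneg _) p
    have hsumlt : α * ∑ x ∈ K, |f x - g x| ^ p < y'.toReal :=
      (ENNReal.ofReal_lt_iff_lt_toReal
        (mul_nonneg hαpos.le (Finset.sum_nonneg hsum_nonneg)) hy'top).1 hcost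
    have hsmall : ∀ x ∈ K, |f x - g x| < ε x := by
      intro x hx
      have hle : |f x - g x| ^ p ≤ ∑ z ∈ K, |f z - g z| ^ p :=
        Finset.single_le_sum hsum_nonneg hx
      have hlt2 : α * |f x - g x| ^ p < y'.toReal :=
        (mul_le_mul_of_nonneg_left hle hαpos.le).trans_lt hsumlt
      have hylt : y'.toReal < α * δ ^ p := by
        rw [hαdef, add_mul, div_mul_cancel₀ _ hδp.ne', one_mul]
        linarith
      have hxp : |f x - g x| ^ p < δ ^ p := by
        by_contra hc
        rw [not_lt] at hc
        have := mul_le_mul_of_nonneg_left hc hαpos.le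
        linarith
      have hxd : |f x - g x| < δ := by
        by_contra hc
        rw [not_lt] at hc
        exact absurd (Real.rpow_le_rpow hδpos.le hc hppos.le) (not_le.2 hxp)
      exact hxd.trans_le (hδle x hx)
    have hgpi : g ∈ I.pi t := by
      intro x hxI
      have hxK : x ∈ K := hIfin.mem_toFinset.2 hxI
      apply hεball x
      rw [Metric.mem_ball, Real.dist_eq, abs_sub_comm]
      exact hsmall x hxK
    have hyEg : y < E g := htsub hgpi
    exact absurd (hyEg.trans (hEg.trans hy'y)) (lt_irrefl y)
  · -- the sup formula implies LSC
    intro hsup f₀ y hy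
    rw [hsup f₀] at hy
    simp only [lt_iSup_iff] at hy
    obtain ⟨K, α, hα, hy⟩ := hy
    have hTtop : approxForm E p α K f₀ ≠ ⊤ :=
      ne_top_of_le_ne_top ENNReal.ofReal_ne_top (approxForm_le_ofReal E h0 p α K f₀)
    obtain ⟨m, hym, hmT⟩ := exists_between hy
    have hrpos : (0 : ℝ≥0∞) < min (m - y) 1 :=
      lt_min (tsub_pos_of_lt hym) zero_lt_one
    have hrtop : min (m - y) 1 ≠ ⊤ :=
      ((min_le_right _ _).trans_lt ENNReal.one_lt_top).ne
    set ρ : ℝ := (min (m - y) 1).toReal with hρdef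
    have hρpos : 0 < ρ := ENNReal.toReal_pos hrpos.ne' hrtop
    set β : ℝ := 2 ^ (p - 1) * α with hβdef
    have hβpos : 0 < β := by positivity
    set ε : ℝ := (ρ / (β * ((K.card : ℝ) + 1))) ^ (1 / p) with hεdef
    have hbase : (0 : ℝ) < ρ / (β * ((K.card : ℝ) + 1)) := by positivity
    have hεpos : 0 < ε := Real.rpow_pos_of_pos hbase _
    have hεp : ε ^ p = ρ / (β * ((K.card : ℝ) + 1)) := by
      rw [hεdef, ← Real.rpow_mul hbase.le, one_div, inv_mul_cancel₀ hppos.ne', Real.rpow_one]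
    have hev : ∀ᶠ f in 𝓝 f₀, ∀ x ∈ K, |f x - f₀ x| < ε := by
      rw [Finset.eventually_all]
      intro x _
      have hc := ((continuous_apply x).continuousAt (x := f₀)).preimage_mem_nhds
        (Metric.ball_mem_nhds (f₀ x) hεpos)
      filter_upwards [hc] with f hf
      simpa [Real.dist_eq] using hf
    filter_upwards [hev] with f hf
    rw [hsup f]
    by_contra hcon
    rw [not_lt] at hcon
    have h1 : approxForm E p β K f ≤ y :=
      (le_iSup_of_le K (le_iSup_of_le β (le_iSup (fun _ : 0 < β => approxForm E p β K f) hβpos))).trans hcon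
    have h2 := approxForm_key E hp hα K f f₀
    have hsumle : β * ∑ x ∈ K, |f x - f₀ x| ^ p ≤ ρ := by
      have hterm : ∀ x ∈ K, |f x - f₀ x| ^ p ≤ ε ^ p := fun x hx =>
        Real.rpow_le_rpow (abs_nonneg _) (hf x hx).le hppos.le
      have hsum : ∑ x ∈ K, |f x - f₀ x| ^ p ≤ (K.card : ℝ) * ε ^ p := by
        have := Finset.sum_le_card_nsmul K _ _ hterm
        rwa [nsmul_eq_mul] at this
      calc β * ∑ x ∈ K, |f x - f₀ x| ^ p ≤ β * ((K.card : ℝ) * ε ^ p) :=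
            mul_le_mul_of_nonneg_left hsum hβpos.le
        _ = ρ * ((β * (K.card : ℝ)) / (β * ((K.card : ℝ) + 1))) := by rw [hεp]; ring
        _ ≤ ρ * 1 := by
            refine mul_le_mul_of_nonneg_left ?_ hρpos.le
            rw [div_le_one (by positivity)]
            nlinarith
        _ = ρ := mul_one ρ
    have hcor : ENNReal.ofReal (β * ∑ x ∈ K, |f x - f₀ x| ^ p) ≤ min (m - y) 1 := by
      calc ENNReal.ofReal (β * ∑ x ∈ K, |f x - f₀ x| ^ p) ≤ ENNReal.ofReal ρ :=
            ENNReal.ofReal_le_ofReal hsumle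
        _ = min (m - y) 1 := ENNReal.ofReal_toReal hrtop
    have hfinal : approxForm E p α K f₀ ≤ m := by
      calc approxForm E p α K f₀ ≤ approxForm E p β K f
            + ENNReal.ofReal (β * ∑ x ∈ K, |f x - f₀ x| ^ p) := h2
        _ ≤ y + min (m - y) 1 := add_le_add h1 hcor
        _ ≤ y + (m - y) := add_le_add le_rfl (min_le_left _ _)
        _ = m := add_tsub_cancel_of_le hym.le
    exact hmT.not_ge hfinal
end
end

section
/- Let X be a nonempty set and let E : F(X) → [0,∞] be convex with E(0) = 0 and lower semicontinuous with respect to pointwise convergence. Then for all x, y ∈ X the following are equivalent: (i) δ_x − δ_y lies in the modular cone M(E*) of the convex conjugate E*; (ii) the elementary resistance R(x,y) is finite; (iii) the t-resistance R_t(x,y) is finite for some t > 0. Analogously, the following are equivalent for x ∈ X: (i') δ_x ∈ M(E*); (ii') R_∞(x) < ∞; (iii') R_{t,∞}(x) < ∞ for some t > 0. -/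
open scoped ENNReal NNReal

noncomputable section

/-- The elementary resistance `R(x,y) = sup {f x − f y : E f ≤ 1}`. -/
noncomputable def eRes {X : Type*} (E : (X → ℝ) → ℝ≥0∞) (x y : X) : ℝ≥0∞ :=
  ⨆ (f : X → ℝ) (_ : E f ≤ 1), ENNReal.ofReal (f x - f y)

/-- The elementary resistance between `x` and `∞`: `R_∞(x) = sup {f x : E f ≤ 1}`. -/
noncomputable def eResInf {X : Type*} (E : (X → ℝ) → ℝ≥0∞) (x : X) : ℝ≥0∞ :=
  ⨆ (f : X → ℝ) (_ : E f ≤ 1), ENNReal.ofReal (f x)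

/-- The `t`-resistance `R_t(x,y) = sup_f ( t (f x − f y) − E f )`. -/
noncomputable def tRes {X : Type*} (E : (X → ℝ) → ℝ≥0∞) (t : ℝ) (x y : X) : ℝ≥0∞ :=
  ⨆ f : X → ℝ, ENNReal.ofReal (t * (f x - f y)) - E f

/-- The `t`-resistance between `x` and `∞`: `R_{t,∞}(x) = sup_f ( t f x − E f )`. -/
noncomputable def tResInf {X : Type*} (E : (X → ℝ) → ℝ≥0∞) (t : ℝ) (x : X) : ℝ≥0∞ :=
  ⨆ f : X → ℝ, ENNReal.ofReal (t * f x) - E f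

/-- The convex conjugate of `E` on the dual `F_c(X)` of `F(X)`, identified with the
finitely supported functions via the pairing `(g, f) = ∑ₓ g x * f x`. -/
noncomputable def conjDual {X : Type*} (E : (X → ℝ) → ℝ≥0∞) (g : X →₀ ℝ) : ℝ≥0∞ :=
  ⨆ f : X → ℝ, ENNReal.ofReal (g.sum fun x c => c * f x) - E f

section Auxiliary

variable {X : Type*}

lemma pair_smul (t : ℝ) (h : X →₀ ℝ) (f : X → ℝ) :
    ((t • h).sum fun a c => c * f a) = t * (h.sum fun a c => c * f a) := by
  rw [Finsupp.sum_smul_index' (h := fun a c => c * f a) (fun i => zero_mul (f i))]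
  simp only [Finsupp.sum, smul_eq_mul, Finset.mul_sum]
  exact Finset.sum_congr rfl fun a _ => by ring

lemma key_lemma (E : (X → ℝ) → ℝ≥0∞) (hconv : ConvexENNReal E) (h0 : E 0 = 0)
    (g : X →₀ ℝ) (L : (X → ℝ) → ℝ)
    (hL : ∀ f, (g.sum fun a c => c * f a) = L f) :
    ((g ∈ modularCone (conjDual E)) ↔
      (⨆ f, ⨆ _ : E f ≤ 1, ENNReal.ofReal (L f)) ≠ ⊤) ∧
    ((⨆ f, ⨆ _ : E f ≤ 1, ENNReal.ofReal (L f)) ≠ ⊤ ↔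
      ∃ t : ℝ, 0 < t ∧ (⨆ f, ENNReal.ofReal (t * L f) - E f) ≠ ⊤) := by
  have hLsmul : ∀ (s : ℝ) (f : X → ℝ), L (s • f) = s * L f := by
    intro s f
    rw [← hL, ← hL]
    simp only [Finsupp.sum, Pi.smul_apply, smul_eq_mul, Finset.mul_sum]
    exact Finset.sum_congr rfl fun a _ => by ring
  have hscale : ∀ (f : X → ℝ) (s : ℝ), 0 ≤ s → s ≤ 1 →
      E (s • f) ≤ ENNReal.ofReal s * E f := by
    intro f s hs hs1
    have h := hconv f 0 s (1 - s) hs (by linarith) (by ring)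
    simpa [h0] using h
  have hRt_to_M : ∀ t : ℝ, 0 < t → (⨆ f, ENNReal.ofReal (t * L f) - E f) ≠ ⊤ →
      g ∈ modularCone (conjDual E) := by
    intro t ht hfin
    refine ⟨t⁻¹, t • g, inv_nonneg.mpr ht.le, ?_,
      by rw [smul_smul, inv_mul_cancel₀ ht.ne', one_smul]⟩
    have heq : conjDual E (t • g) = ⨆ f, ENNReal.ofReal (t * L f) - E f := by
      unfold conjDual
      exact iSup_congr fun f => by rw [pair_smul, hL]
    rw [heq]; exact hfin
  have hM_to_R : g ∈ modularCone (conjDual E) →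
      (⨆ f, ⨆ _ : E f ≤ 1, ENNReal.ofReal (L f)) ≠ ⊤ := by
    rintro ⟨lam, h, hlam, hfin, hg⟩
    set C := conjDual E h with hC
    have hCne : C + 1 ≠ ⊤ := ENNReal.add_ne_top.mpr ⟨hfin, ENNReal.one_ne_top⟩
    refine ne_of_lt (lt_of_le_of_lt (iSup₂_le ?_)
      (ENNReal.ofReal_lt_top : ENNReal.ofReal (lam * (C + 1).toReal) < ⊤))
    intro f hEf
    have h1 : ENNReal.ofReal (h.sum fun x c => c * f x) - E f ≤ C :=
      le_iSup (fun f => ENNReal.ofReal (h.sum fun x c => c * f x) - E f) f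
    have h2 : ENNReal.ofReal (h.sum fun x c => c * f x) ≤ C + 1 :=
      (tsub_le_iff_right.mp h1).trans (add_le_add (le_refl C) hEf)
    have h3 : (h.sum fun x c => c * f x) ≤ (C + 1).toReal :=
      (ENNReal.ofReal_le_iff_le_toReal hCne).mp h2
    have h4 : L f ≤ lam * (C + 1).toReal := by
      rw [← hL, hg, pair_smul]
      exact mul_le_mul_of_nonneg_left h3 hlam
    exact ENNReal.ofReal_le_ofReal h4
  have hR_to_Rt : (⨆ f, ⨆ _ : E f ≤ 1, ENNReal.ofReal (L f)) ≠ ⊤ →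
      ∃ t : ℝ, 0 < t ∧ (⨆ f, ENNReal.ofReal (t * L f) - E f) ≠ ⊤ := by
    intro hfin
    set C := ⨆ f, ⨆ _ : E f ≤ 1, ENNReal.ofReal (L f) with hC
    set c := C.toReal with hc
    have hc0 : 0 ≤ c := ENNReal.toReal_nonneg
    set t := (c + 1)⁻¹ with ht
    have ht0 : 0 < t := by positivity
    have htc : t * c ≤ 1 := by
      rw [ht]
      calc (c + 1)⁻¹ * c ≤ (c + 1)⁻¹ * (c + 1) :=
            mul_le_mul_of_nonneg_left (by linarith) (by positivity)
        _ = 1 := inv_mul_cancel₀ (by positivity)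
    refine ⟨t, ht0, ?_⟩
    have hb : ∀ f, ENNReal.ofReal (t * L f) - E f ≤ ENNReal.ofReal (t * c) := by
      intro f
      by_cases htop : E f = ⊤
      · simp [htop]
      · by_cases hE1 : E f ≤ 1
        · have h1 : ENNReal.ofReal (L f) ≤ C := by
            rw [hC]; exact le_iSup₂ (f := fun f (_ : E f ≤ 1) => ENNReal.ofReal (L f)) f hE1
          have h2 : L f ≤ c := (ENNReal.ofReal_le_iff_le_toReal hfin).mp h1
          exact tsub_le_self.trans (ENNReal.ofReal_le_ofReal
            (mul_le_mul_of_nonneg_left h2 ht0.le))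
        · push_neg at hE1
          set e := (E f).toReal with he
          have he1 : 1 < e := by
            have := ENNReal.toReal_strict_mono htop hE1
            simpa using this
          have he0 : 0 < e := by linarith
          have hEof : ENNReal.ofReal e⁻¹ * E f = 1 := by
            rw [← ENNReal.ofReal_toReal htop, ← he,
              ← ENNReal.ofReal_mul (by positivity), inv_mul_cancel₀ he0.ne',
              ENNReal.ofReal_one]
          have hsc : E (e⁻¹ • f) ≤ 1 := by
            have := hscale f e⁻¹ (by positivity) (inv_le_one_of_one_le₀ he1.le)
            rwa [hEof] at this
          have h1 : ENNReal.ofReal (L (e⁻¹ • f)) ≤ C := by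
            rw [hC]
            exact le_iSup₂ (f := fun f (_ : E f ≤ 1) => ENNReal.ofReal (L f)) (e⁻¹ • f) hsc
          have h2 : e⁻¹ * L f ≤ c := by
            have h2' := (ENNReal.ofReal_le_iff_le_toReal hfin).mp h1
            rwa [hLsmul] at h2'
          have h3 : L f ≤ c * e := by
            have h3' := mul_le_mul_of_nonneg_left h2 he0.le
            rw [← mul_assoc, mul_inv_cancel₀ he0.ne', one_mul] at h3'
            linarith
          have h4 : t * L f ≤ e := by nlinarith
          have h5 : ENNReal.ofReal (t * L f) ≤ E f := by
            rw [← ENNReal.ofReal_toReal htop]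
            exact ENNReal.ofReal_le_ofReal h4
          simp [tsub_eq_zero_of_le h5]
    exact ne_of_lt (lt_of_le_of_lt (iSup_le hb) ENNReal.ofReal_lt_top)
  refine ⟨⟨hM_to_R, fun hR => ?_⟩, ⟨hR_to_Rt, ?_⟩⟩
  · obtain ⟨t, ht, hRt⟩ := hR_to_Rt hR
    exact hRt_to_M t ht hRt
  · rintro ⟨t, ht, hRt⟩
    exact hM_to_R (hRt_to_M t ht hRt)

end Auxiliary

/-- **Finiteness of the resistance** (Corollaries 4.3 and 4.4). -/
theorem resistance_finiteness {X : Type*} [Nonempty X] (E : (X → ℝ) → ℝ≥0∞)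
    (hconv : ConvexENNReal E) (h0 : E 0 = 0) (hlsc : LowerSemicontinuous E) :
    (∀ x y : X,
      ((Finsupp.single x 1 - Finsupp.single y 1 ∈ modularCone (conjDual E)) ↔
        eRes E x y ≠ ⊤) ∧
      (eRes E x y ≠ ⊤ ↔ ∃ t : ℝ, 0 < t ∧ tRes E t x y ≠ ⊤)) ∧
    (∀ x : X,
      ((Finsupp.single x 1 ∈ modularCone (conjDual E)) ↔ eResInf E x ≠ ⊤) ∧
      (eResInf E x ≠ ⊤ ↔ ∃ t : ℝ, 0 < t ∧ tResInf E t x ≠ ⊤)) := by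

  constructor
  · intro x y
    have h := key_lemma E hconv h0 (Finsupp.single x 1 - Finsupp.single y 1)
      (fun f => f x - f y)
      (fun f => by
        rw [Finsupp.sum_sub_index (fun a b₁ b₂ => sub_mul b₁ b₂ (f a))]
        simp [Finsupp.sum_single_index])
    exact h
  · intro x
    have h := key_lemma E hconv h0 (Finsupp.single x 1) (fun f => f x)
      (fun f => by simp [Finsupp.sum_single_index])
    exact h
end
end

section
/- Let X be a nonempty set, 1 ≤ p < ∞ with conjugate exponent q (1/p + 1/q = 1), and let E : F(X) → [0,∞] be convex, positively p-homogeneous, lower semicontinuous with respect to pointwise convergence, and E(0) = 0. If p > 1, then for all x, y ∈ X and t > 0: R_t(x,y) = (p−1)·(t/p)^q · R(x,y)^q and R_{t,∞}(x) = (p−1)·(t/p)^q · R_∞(x)^q. If p = 1, then R_t(x,y) = 0 if R(x,y) ≤ 1/t and R_t(x,y) = ∞ if R(x,y) > 1/t, and likewise R_{t,∞}(x) = 0 if R_∞(x) ≤ 1/t and = ∞ if R_∞(x) > 1/t. -/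
open scoped ENNReal NNReal

noncomputable section

/-- `ρ` is positively `p`-homogeneous: `ρ (λ • x) = λ^p • ρ x` for `λ ≥ 0`. -/
def PosHomogeneous {W : Type*} [AddCommGroup W] [Module ℝ W] (p : ℝ) (ρ : W → ℝ≥0∞) : Prop :=
  ∀ (lam : ℝ), 0 ≤ lam → ∀ x : W, ρ (lam • x) = ENNReal.ofReal (lam ^ p) * ρ x

private lemma eq_top_of_nat_mul_le {c : ℝ} (hc : 0 < c) {s : ℝ≥0∞}
    (h : ∀ n : ℕ, ENNReal.ofReal (n * c) ≤ s) : s = ⊤ := by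
  by_contra hs
  obtain ⟨n, hn⟩ := exists_nat_gt (s.toReal / c)
  have h2 : (n : ℝ) * c ≤ s.toReal := (ENNReal.ofReal_le_iff_le_toReal hs).1 (h n)
  rw [div_lt_iff₀ hc] at hn
  linarith

private lemma young' {p q : ℝ} (hpq : Real.HolderConjugate p q) {a u : ℝ}
    (ha : 0 ≤ a) (hu : 0 ≤ u) :
    a * u ≤ (p - 1) * (a / p) ^ q + u ^ p := by
  have hp0 : (0:ℝ) < p := hpq.pos
  have hq0 : (0:ℝ) < q := hpq.symm.pos
  set α : ℝ := p ^ (p⁻¹ : ℝ) with hαdef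
  have hα0 : 0 < α := Real.rpow_pos_of_pos hp0 _
  have hαp : α ^ p = p := by
    rw [hαdef, ← Real.rpow_mul hp0.le, inv_mul_cancel₀ hp0.ne', Real.rpow_one]
  have hq1 : p⁻¹ * q = q - 1 := by
    have h1 : p⁻¹ = 1 - q⁻¹ := by linarith [hpq.inv_add_inv_eq_one]
    calc p⁻¹ * q = (1 - q⁻¹) * q := by rw [h1]
      _ = q - q⁻¹ * q := by ring
      _ = q - 1 := by rw [inv_mul_cancel₀ hq0.ne']
  have hαq : α ^ q = p ^ (q - 1) := by
    rw [hαdef, ← Real.rpow_mul hp0.le, hq1]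
  have hpq2 : p ^ q = α ^ q * p := by
    rw [hαq]
    calc p ^ q = p ^ ((q - 1) + 1) := by ring_nf
      _ = p ^ (q-1) * p := by rw [Real.rpow_add_one hp0.ne']
  have hkey := Real.young_inequality_of_nonneg (mul_nonneg hα0.le hu)
      (div_nonneg ha hα0.le) hpq
  have e1 : (α*u)*(a/α) = a*u := by field_simp
  have e2 : (α*u)^p/p = u^p := by
    rw [Real.mul_rpow hα0.le hu, hαp]; field_simp
  have e3 : (a/α)^q/q = (p-1)*(a/p)^q := by
    rw [Real.div_rpow ha hα0.le, Real.div_rpow ha hp0.le, hpq2]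
    have hαq0 : (0:ℝ) < α ^ q := Real.rpow_pos_of_pos hα0 _
    field_simp
    linear_combination (-(a ^ q)) * hpq.mul_eq_add
  calc a * u = (α*u)*(a/α) := e1.symm
    _ ≤ (α*u)^p/p + (a/α)^q/q := hkey
    _ = u ^ p + (p-1)*(a/p)^q := by rw [e2, e3]
    _ = (p-1)*(a/p)^q + u^p := by ring

private lemma aux_gt {X : Type*} (E : (X → ℝ) → ℝ≥0∞) {p q : ℝ}
    (hpq : Real.HolderConjugate p q) (hhom : PosHomogeneous p E)
    (L : (X → ℝ) → ℝ) (hL : ∀ (c : ℝ) (f : X → ℝ), 0 ≤ c → L (c • f) = c * L f)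
    {t : ℝ} (ht : 0 < t) :
    (⨆ f, ENNReal.ofReal (t * L f) - E f) =
      ENNReal.ofReal (p - 1) * ENNReal.ofReal (t / p) ^ q *
        (⨆ f, ⨆ _ : E f ≤ 1, ENNReal.ofReal (L f)) ^ q := by
  have hp1 : 1 < p := hpq.lt
  have hp0 : (0:ℝ) < p := hpq.pos
  have hq0 : (0:ℝ) < q := hpq.symm.pos
  set R : ℝ≥0∞ := ⨆ f, ⨆ _ : E f ≤ 1, ENNReal.ofReal (L f) with hRdef
  have hCne : ENNReal.ofReal (p - 1) * ENNReal.ofReal (t / p) ^ q ≠ 0 := by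
    apply mul_ne_zero
    · simpa using sub_pos.2 hp1
    · exact (ENNReal.rpow_pos (ENNReal.ofReal_pos.2 (div_pos ht hp0))
        ENNReal.ofReal_ne_top).ne'
  apply le_antisymm
  · -- upper bound
    refine iSup_le fun f => ?_
    rw [tsub_le_iff_right]
    rcases le_or_gt (L f) 0 with hr | hr
    · have : t * L f ≤ 0 := mul_nonpos_of_nonneg_of_nonpos ht.le hr
      rw [ENNReal.ofReal_of_nonpos this]
      exact zero_le
    by_cases hft : E f = ⊤
    · simp [hft]
    set b := (E f).toReal with hbdef
    have hbE : E f = ENNReal.ofReal b := (ENNReal.ofReal_toReal hft).symm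
    have hb0 : 0 ≤ b := ENNReal.toReal_nonneg
    rcases eq_or_lt_of_le hb0 with hb0' | hbpos
    · -- E f = 0 : R = ⊤
      have hE0 : E f = 0 := by rw [hbE, ← hb0', ENNReal.ofReal_zero]
      have hRtop : R = ⊤ := by
        apply eq_top_of_nat_mul_le hr
        intro n
        have hE : E ((n : ℝ) • f) ≤ 1 := by
          rw [hhom n (Nat.cast_nonneg n) f, hE0, mul_zero]; exact zero_le_one
        have : ENNReal.ofReal ((n:ℝ) * L f) = ENNReal.ofReal (L ((n:ℝ) • f)) := by
          rw [hL n f (Nat.cast_nonneg n)]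
        rw [this, hRdef]
        exact le_iSup₂_of_le ((n:ℝ) • f) hE le_rfl
      have : ENNReal.ofReal (p - 1) * ENNReal.ofReal (t / p) ^ q * R ^ q = ⊤ := by
        rw [hRtop, ENNReal.top_rpow_of_pos hq0, ENNReal.mul_top hCne]
      simp [this]
    · -- 0 < b
      set c := b ^ (p⁻¹ : ℝ) with hcdef
      have hcpos : 0 < c := Real.rpow_pos_of_pos hbpos _
      have hcp : c ^ p = b := by
        rw [hcdef, ← Real.rpow_mul hb0, inv_mul_cancel₀ hp0.ne', Real.rpow_one]
      have hEg : E (c⁻¹ • f) ≤ 1 := by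
        rw [hhom c⁻¹ (inv_nonneg.2 hcpos.le) f, hbE,
          Real.inv_rpow hcpos.le, hcp, ← ENNReal.ofReal_mul (inv_nonneg.2 hb0),
          inv_mul_cancel₀ hbpos.ne', ENNReal.ofReal_one]
      have hRge : ENNReal.ofReal (c⁻¹ * L f) ≤ R := by
        have : ENNReal.ofReal (c⁻¹ * L f) = ENNReal.ofReal (L (c⁻¹ • f)) := by
          rw [hL c⁻¹ f (inv_nonneg.2 hcpos.le)]
        rw [this, hRdef]
        exact le_iSup₂_of_le (c⁻¹ • f) hEg le_rfl
      rcases eq_or_ne R ⊤ with hRtop | hRne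
      · have : ENNReal.ofReal (p - 1) * ENNReal.ofReal (t / p) ^ q * R ^ q = ⊤ := by
          rw [hRtop, ENNReal.top_rpow_of_pos hq0, ENNReal.mul_top hCne]
        simp [this]
      · set ρ := R.toReal with hρdef
        have hρ0 : 0 ≤ ρ := ENNReal.toReal_nonneg
        have hrc : c⁻¹ * L f ≤ ρ := (ENNReal.ofReal_le_iff_le_toReal hRne).1 hRge
        have hrρ : L f ≤ c * ρ := by
          have h1 : c * (c⁻¹ * L f) ≤ c * ρ := mul_le_mul_of_nonneg_left hrc hcpos.le
          calc L f = c * (c⁻¹ * L f) := by field_simp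
            _ ≤ c * ρ := h1
        have young := young' hpq (mul_nonneg ht.le hρ0) hcpos.le
        have hreal : t * L f ≤ (p-1) * ((t/p)^q * ρ^q) + b := by
          have h3 : ((t/p)*ρ)^q = (t/p)^q * ρ^q :=
            Real.mul_rpow (div_nonneg ht.le hp0.le) hρ0
          calc t * L f ≤ (t*ρ)*c := by nlinarith
            _ ≤ (p-1)*((t*ρ)/p)^q + c^p := young
            _ = (p-1)*((t/p)^q * ρ^q) + b := by
                rw [show (t*ρ)/p = (t/p)*ρ by ring, h3, hcp]
        have hRρ : R = ENNReal.ofReal ρ := (ENNReal.ofReal_toReal hRne).symm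
        have e1 : (0:ℝ) ≤ p - 1 := sub_nonneg.2 hp1.le
        have e2 : (0:ℝ) ≤ (t/p)^q := Real.rpow_nonneg (div_nonneg ht.le hp0.le) q
        rw [hbE, hRρ, ENNReal.ofReal_rpow_of_nonneg hρ0 hq0.le,
            ENNReal.ofReal_rpow_of_nonneg (div_nonneg ht.le hp0.le) hq0.le,
            ← ENNReal.ofReal_mul e1,
            ← ENNReal.ofReal_mul (mul_nonneg e1 e2),
            ← ENNReal.ofReal_add (mul_nonneg (mul_nonneg e1 e2) (Real.rpow_nonneg hρ0 q)) hb0]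
        exact ENNReal.ofReal_le_ofReal (by rw [mul_assoc]; exact hreal)
  · -- lower bound
    have hRq : R ^ q = ⨆ f, ⨆ _ : E f ≤ 1, (ENNReal.ofReal (L f)) ^ q := by
      have h1 := (ENNReal.orderIsoRpow q hq0).map_iSup
        (fun f => ⨆ _ : E f ≤ 1, ENNReal.ofReal (L f))
      simp only [ENNReal.orderIsoRpow_apply] at h1
      rw [hRdef, h1]
      congr 1; funext f
      exact (ENNReal.orderIsoRpow q hq0).map_iSup (fun _ : E f ≤ 1 => ENNReal.ofReal (L f))
    rw [hRq, ENNReal.mul_iSup]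
    refine iSup_le fun f => ?_
    rw [ENNReal.mul_iSup]
    refine iSup_le fun hf => ?_
    rcases le_or_gt (L f) 0 with hr | hr
    · rw [ENNReal.ofReal_of_nonpos hr, ENNReal.zero_rpow_of_pos hq0, mul_zero]
      exact zero_le
    · set s := t * L f / p with hsdef
      have hs : 0 < s := div_pos (mul_pos ht hr) hp0
      set lam := s ^ (q - 1 : ℝ) with hlamdef
      have hlam : 0 < lam := Real.rpow_pos_of_pos hs _
      have hA : t * (lam * L f) = p * s ^ q := by
        calc t * (lam * L f) = lam * (t * L f) := by ring
          _ = s ^ (q-1:ℝ) * (p * s) := by rw [hlamdef, hsdef]; field_simp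
          _ = p * (s ^ (q-1:ℝ) * s) := by ring
          _ = p * s ^ q := by rw [← Real.rpow_add_one hs.ne' (q-1), sub_add_cancel]
      have hB : lam ^ p = s ^ q := by
        rw [hlamdef, ← Real.rpow_mul hs.le, hpq.symm.sub_one_mul_conj]
      have hdiff : t * (lam * L f) - lam ^ p = (p-1) * s ^ q := by
        rw [hA, hB]; ring
      have hE : E (lam • f) ≤ ENNReal.ofReal (lam ^ p) := by
        rw [hhom lam hlam.le f]
        calc ENNReal.ofReal (lam ^ p) * E f ≤ ENNReal.ofReal (lam ^ p) * 1 :=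
          mul_le_mul_right hf _
          _ = ENNReal.ofReal (lam ^ p) := mul_one _
      have hterm : ENNReal.ofReal ((p-1) * s^q) ≤
          ENNReal.ofReal (t * L (lam • f)) - E (lam • f) := by
        rw [hL lam f hlam.le]
        calc ENNReal.ofReal ((p-1)*s^q) = ENNReal.ofReal (t*(lam*L f) - lam^p) := by
              rw [hdiff]
          _ = ENNReal.ofReal (t*(lam*L f)) - ENNReal.ofReal (lam^p) :=
              ENNReal.ofReal_sub _ (Real.rpow_nonneg hlam.le _)
          _ ≤ ENNReal.ofReal (t*(lam*L f)) - E (lam • f) := tsub_le_tsub_left hE _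
      have hid : ENNReal.ofReal (p - 1) * ENNReal.ofReal (t / p) ^ q *
          (ENNReal.ofReal (L f)) ^ q = ENNReal.ofReal ((p-1) * s^q) := by
        have e1 : (0:ℝ) ≤ p - 1 := sub_nonneg.2 hp1.le
        have e2 : (0:ℝ) ≤ (t/p)^q := Real.rpow_nonneg (div_nonneg ht.le hp0.le) q
        rw [ENNReal.ofReal_rpow_of_nonneg (div_nonneg ht.le hp0.le) hq0.le,
            ENNReal.ofReal_rpow_of_nonneg hr.le hq0.le,
            ← ENNReal.ofReal_mul e1,
            ← ENNReal.ofReal_mul (mul_nonneg e1 e2)]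
        congr 1
        rw [hsdef, show t * L f / p = (t/p) * L f by ring,
            Real.mul_rpow (div_nonneg ht.le hp0.le) hr.le]
        ring
      rw [hid]
      exact hterm.trans (le_iSup (fun g => ENNReal.ofReal (t * L g) - E g) (lam • f))

private lemma aux_one {X : Type*} (E : (X → ℝ) → ℝ≥0∞)
    (hhom : PosHomogeneous 1 E)
    (L : (X → ℝ) → ℝ) (hL : ∀ (c : ℝ) (f : X → ℝ), 0 ≤ c → L (c • f) = c * L f)
    {t : ℝ} (ht : 0 < t) :
    ((⨆ f, ⨆ _ : E f ≤ 1, ENNReal.ofReal (L f)) ≤ ENNReal.ofReal (1/t) →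
      (⨆ f, ENNReal.ofReal (t * L f) - E f) = 0) ∧
    (ENNReal.ofReal (1/t) < (⨆ f, ⨆ _ : E f ≤ 1, ENNReal.ofReal (L f)) →
      (⨆ f, ENNReal.ofReal (t * L f) - E f) = ⊤) := by
  have hhom' : ∀ (c : ℝ), 0 ≤ c → ∀ f, E (c • f) = ENNReal.ofReal c * E f := by
    intro c hc f
    rw [hhom c hc f, Real.rpow_one]
  constructor
  · intro hR
    refine le_antisymm (iSup_le fun f => ?_) zero_le
    rw [tsub_le_iff_right, zero_add]
    rcases le_or_gt (L f) 0 with hr | hr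
    · rw [ENNReal.ofReal_of_nonpos (mul_nonpos_of_nonneg_of_nonpos ht.le hr)]
      exact zero_le
    by_cases hft : E f = ⊤
    · rw [hft]; exact le_top
    set b := (E f).toReal with hbdef
    have hbE : E f = ENNReal.ofReal b := (ENNReal.ofReal_toReal hft).symm
    have hb0 : 0 ≤ b := ENNReal.toReal_nonneg
    rcases eq_or_lt_of_le hb0 with hb0' | hbpos
    · -- E f = 0 forces R = ⊤, contradiction
      have hE0 : E f = 0 := by rw [hbE, ← hb0', ENNReal.ofReal_zero]
      have hRtop : (⨆ g, ⨆ _ : E g ≤ 1, ENNReal.ofReal (L g)) = ⊤ := by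
        apply eq_top_of_nat_mul_le hr
        intro n
        have hE : E ((n : ℝ) • f) ≤ 1 := by
          rw [hhom' n (Nat.cast_nonneg n) f, hE0, mul_zero]; exact zero_le_one
        have : ENNReal.ofReal ((n:ℝ) * L f) = ENNReal.ofReal (L ((n:ℝ) • f)) := by
          rw [hL n f (Nat.cast_nonneg n)]
        rw [this]
        exact le_iSup₂_of_le ((n:ℝ) • f) hE le_rfl
      rw [hRtop, top_le_iff] at hR
      exact absurd hR ENNReal.ofReal_ne_top
    · -- 0 < b
      have hEg : E (b⁻¹ • f) ≤ 1 := by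
        rw [hhom' b⁻¹ (inv_nonneg.2 hb0) f, hbE,
          ← ENNReal.ofReal_mul (inv_nonneg.2 hb0), inv_mul_cancel₀ hbpos.ne',
          ENNReal.ofReal_one]
      have hRge : ENNReal.ofReal (b⁻¹ * L f) ≤ ENNReal.ofReal (1/t) := by
        refine le_trans ?_ hR
        have : ENNReal.ofReal (b⁻¹ * L f) = ENNReal.ofReal (L (b⁻¹ • f)) := by
          rw [hL b⁻¹ f (inv_nonneg.2 hb0)]
        rw [this]
        exact le_iSup₂_of_le (b⁻¹ • f) hEg le_rfl
      have h1 : b⁻¹ * L f ≤ 1/t :=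
        (ENNReal.ofReal_le_ofReal_iff (by positivity)).1 hRge
      have h2 : t * L f ≤ b := by
        have h3 := mul_le_mul_of_nonneg_left h1 (mul_pos ht hbpos).le
        calc t * L f = t * b * (b⁻¹ * L f) := by field_simp
          _ ≤ t * b * (1/t) := h3
          _ = b := by field_simp
      rw [hbE]
      exact ENNReal.ofReal_le_ofReal h2
  · intro hR
    obtain ⟨f, hf⟩ := lt_iSup_iff.1 hR
    obtain ⟨hEf, hlt⟩ := lt_iSup_iff.1 hf
    have hr : 0 < L f := by
      by_contra hc
      rw [ENNReal.ofReal_of_nonpos (not_lt.1 hc)] at hlt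
      exact absurd hlt (by simp)
    have h1t : 1/t < L f := (ENNReal.ofReal_lt_ofReal_iff hr).1 hlt
    have h1 : 1 < t * L f := by
      rw [div_lt_iff₀ ht] at h1t
      nlinarith
    apply eq_top_of_nat_mul_le (c := t * L f - 1) (by linarith)
    intro n
    have hE : E ((n:ℝ) • f) ≤ ENNReal.ofReal n := by
      rw [hhom' n (Nat.cast_nonneg n) f]
      calc ENNReal.ofReal n * E f ≤ ENNReal.ofReal n * 1 := mul_le_mul_right hEf _
        _ = ENNReal.ofReal n := mul_one _
    calc ENNReal.ofReal ((n:ℝ) * (t * L f - 1))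
        = ENNReal.ofReal (t * ((n:ℝ) * L f) - n) := by
          rw [show (n:ℝ) * (t * L f - 1) = t * ((n:ℝ) * L f) - n from by ring]
      _ = ENNReal.ofReal (t * ((n:ℝ) * L f)) - ENNReal.ofReal n :=
          ENNReal.ofReal_sub _ (Nat.cast_nonneg n)
      _ ≤ ENNReal.ofReal (t * L ((n:ℝ) • f)) - E ((n:ℝ) • f) := by
          rw [hL n f (Nat.cast_nonneg n)]
          exact tsub_le_tsub_left hE _
      _ ≤ ⨆ g, ENNReal.ofReal (t * L g) - E g :=
          le_iSup (fun g => ENNReal.ofReal (t * L g) - E g) ((n:ℝ) • f)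

/-- **Resistance for homogeneous functionals** (Theorem 4.5). -/
theorem resistance_homogeneous {X : Type*} [Nonempty X] (E : (X → ℝ) → ℝ≥0∞)
    (p q : ℝ) (hp : 1 ≤ p) (hq : 1 < p → p⁻¹ + q⁻¹ = 1)
    (hconv : ConvexENNReal E) (h0 : E 0 = 0) (hlsc : LowerSemicontinuous E)
    (hhom : PosHomogeneous p E) :
    (1 < p → ∀ (x y : X) (t : ℝ), 0 < t →
      tRes E t x y = ENNReal.ofReal (p - 1) * ENNReal.ofReal (t / p) ^ q * eRes E x y ^ q ∧
      tResInf E t x =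
        ENNReal.ofReal (p - 1) * ENNReal.ofReal (t / p) ^ q * eResInf E x ^ q) ∧
    (p = 1 → ∀ (x y : X) (t : ℝ), 0 < t →
      (eRes E x y ≤ ENNReal.ofReal (1 / t) → tRes E t x y = 0) ∧
      (ENNReal.ofReal (1 / t) < eRes E x y → tRes E t x y = ⊤) ∧
      (eResInf E x ≤ ENNReal.ofReal (1 / t) → tResInf E t x = 0) ∧
      (ENNReal.ofReal (1 / t) < eResInf E x → tResInf E t x = ⊤)) := by
  constructor
  · intro hp1 x y t ht
    have hpq : Real.HolderConjugate p q := Real.holderConjugate_iff.2 ⟨hp1, hq hp1⟩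
    constructor
    · exact aux_gt E hpq hhom (fun f => f x - f y)
        (fun c f hc => by simp [Pi.smul_apply, smul_eq_mul]; ring) ht
    · exact aux_gt E hpq hhom (fun f => f x)
        (fun c f hc => by simp [Pi.smul_apply, smul_eq_mul]) ht
  · intro hpe x y t ht
    subst hpe
    obtain ⟨h1, h2⟩ := aux_one E hhom (fun f => f x - f y)
      (fun c f hc => by simp [Pi.smul_apply, smul_eq_mul]; ring) ht
    obtain ⟨h3, h4⟩ := aux_one E hhom (fun f => f x)
      (fun c f hc => by simp [Pi.smul_apply, smul_eq_mul]) ht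
    exact ⟨h1, h2, h3, h4⟩
end
end

section
/- Let E be a nonlinear resistance form on a nonempty set X. Then: (a) for all x, y, z ∈ X and all t > 0 the t-resistance satisfies the triangle inequality R_t(x,z) ≤ R_t(x,y) + R_t(y,z); (b) if E is symmetric, then R_t(x,y) = R_t(y,x) for all x, y ∈ X and t > 0; (c) if E satisfies the ∇₂-condition, then R_t(x,y) < ∞ for all x, y ∈ X and t > 0. In particular, if E is symmetric and satisfies the ∇₂-condition, then for each t > 0 the function R_t is a pseudometric on X. -/
open scoped ENNReal NNReal

noncomputable section

/-- A normal contraction `C` operates on `E` (`E` is compatible with `C`). -/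
def Operates {X : Type*} (C : ℝ → ℝ) (E : (X → ℝ) → ℝ≥0∞) : Prop :=
  ∀ f g : X → ℝ, E (f + C ∘ g) + E (f - C ∘ g) ≤ E (f + g) + E (f - g)

/-- A nonlinear resistance form: convex with `E 0 = 0`, lower semicontinuous w.r.t. pointwise
convergence, finite elementary resistance, and all normal contractions operate on `E`. -/
def IsNonlinearResistanceForm {X : Type*} (E : (X → ℝ) → ℝ≥0∞) : Prop :=
  ConvexENNReal E ∧ E 0 = 0 ∧ LowerSemicontinuous E ∧
    (∀ x y : X, eRes E x y ≠ ⊤) ∧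
    (∀ C : ℝ → ℝ, LipschitzWith 1 C → C 0 = 0 → Operates C E)

/-- The `∇₂`-condition: there is `K > 2` with `K • ρ x ≤ ρ (2 x)` for all `x ∈ D(ρ)`. -/
def Nabla2 {W : Type*} [AddCommGroup W] [Module ℝ W] (ρ : W → ℝ≥0∞) : Prop :=
  ∃ K : ℝ≥0, 2 < K ∧ ∀ x : W, ρ x ≠ ⊤ → (K : ℝ≥0∞) * ρ x ≤ ρ ((2 : ℝ) • x)

-- auxiliary lemmas

lemma tsub_add_tsub_le' {a b c d : ℝ≥0∞} : (a + b) - (c + d) ≤ (a - c) + (b - d) := by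
  rw [tsub_le_iff_right]
  calc a + b ≤ ((a - c) + c) + ((b - d) + d) := add_le_add le_tsub_add le_tsub_add
  _ = (a - c) + (b - d) + (c + d) := by ring

lemma half_le_aux {W : Type*} [AddCommGroup W] [Module ℝ W] {ρ : W → ℝ≥0∞}
    (hconv : ConvexENNReal ρ) (h0 : ρ 0 = 0) (f : W) :
    ρ ((2⁻¹ : ℝ) • f) ≤ ρ f := by
  have h := hconv f 0 2⁻¹ 2⁻¹ (by norm_num) (by norm_num) (by norm_num)
  simp only [smul_zero, add_zero, h0, mul_zero] at h
  calc ρ ((2⁻¹:ℝ) • f) ≤ ENNReal.ofReal 2⁻¹ * ρ f := h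
  _ ≤ 1 * ρ f := mul_le_mul_left (ENNReal.ofReal_le_one.mpr (by norm_num)) _
  _ = ρ f := one_mul _

lemma scale_lemma {W : Type*} [AddCommGroup W] [Module ℝ W] {ρ : W → ℝ≥0∞}
    (hconv : ConvexENNReal ρ) (h0 : ρ 0 = 0) {K : ℝ≥0}
    (hK : ∀ x : W, ρ x ≠ ⊤ → (K:ℝ≥0∞) * ρ x ≤ ρ ((2:ℝ) • x)) :
    ∀ n : ℕ, ∀ f : W, ρ f ≠ ⊤ →
      ρ (((2:ℝ)^n)⁻¹ • f) ≠ ⊤ ∧ (K:ℝ≥0∞)^n * ρ (((2:ℝ)^n)⁻¹ • f) ≤ ρ f := by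
  intro n
  induction n with
  | zero =>
    intro f hf
    simp only [pow_zero, inv_one, one_smul]
    exact ⟨hf, le_of_eq (one_mul _)⟩
  | succ n ih =>
    intro f hf
    obtain ⟨hfin, hle⟩ := ih f hf
    have hsmul : (((2:ℝ)^(n+1))⁻¹ : ℝ) • f = (2⁻¹:ℝ) • (((2:ℝ)^n)⁻¹ • f) := by
      rw [smul_smul]; congr 1; rw [pow_succ]; field_simp
    have hfin' : ρ (((2:ℝ)^(n+1))⁻¹ • f) ≠ ⊤ := by
      rw [hsmul]
      exact ne_top_of_le_ne_top hfin (half_le_aux hconv h0 _)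
    refine ⟨hfin', ?_⟩
    have h2 : (2:ℝ) • (((2:ℝ)^(n+1))⁻¹ • f) = ((2:ℝ)^n)⁻¹ • f := by
      rw [smul_smul]; congr 1; rw [pow_succ]; field_simp
    have hstep := hK _ hfin'
    rw [h2] at hstep
    calc (K:ℝ≥0∞)^(n+1) * ρ (((2:ℝ)^(n+1))⁻¹ • f)
        = (K:ℝ≥0∞)^n * ((K:ℝ≥0∞) * ρ (((2:ℝ)^(n+1))⁻¹ • f)) := by ring
      _ ≤ (K:ℝ≥0∞)^n * ρ (((2:ℝ)^n)⁻¹ • f) := mul_le_mul_right hstep _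
      _ ≤ ρ f := hle

lemma tRes_triangle_aux {X : Type*} (E : (X → ℝ) → ℝ≥0∞) (hE : IsNonlinearResistanceForm E)
    (t : ℝ) (ht : 0 < t) (x y z : X) :
    tRes E t x z ≤ tRes E t x y + tRes E t y z := by
  obtain ⟨hconv, h0, _, _, hop⟩ := hE
  refine iSup_le fun f => ?_
  set c : ℝ := f y / 2 with hc
  set C : ℝ → ℝ := fun s => |s - c| - |c| with hCdef
  have hlip : LipschitzWith 1 C := by
    refine LipschitzWith.of_dist_le_mul fun a b => ?_
    simp only [Real.dist_eq, NNReal.coe_one, one_mul, C]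
    have heq : (|a - c| - |c|) - (|b - c| - |c|) = |a - c| - |b - c| := by ring
    have h3 := abs_abs_sub_abs_le_abs_sub (a - c) (b - c)
    have h4 : (a - c) - (b - c) = a - b := by ring
    rw [h4] at h3
    rw [heq]
    exact h3
  have hC0 : C 0 = 0 := by simp [C]
  set u : X → ℝ := fun w => f w / 2 with hu
  set g₁ : X → ℝ := u + C ∘ u with hg₁
  set g₂ : X → ℝ := u - C ∘ u with hg₂
  have hEsum : E g₁ + E g₂ ≤ E f := by
    have h := hop C hlip hC0 u u
    have huu : u + u = f := funext fun w => by simp [u]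
    have huu0 : u - u = 0 := sub_self u
    rw [huu, huu0, h0, add_zero] at h
    exact h
  have hA : f x - f z ≤ (g₁ x - g₁ y) + (g₂ y - g₂ z) := by
    simp only [g₁, g₂, Pi.add_apply, Pi.sub_apply, Function.comp_apply, u, C]
    have hcc : |f y / 2 - c| = 0 := by rw [hc]; simp
    rw [hcc]
    have h1 := le_abs_self (f x / 2 - c)
    have h2 := neg_abs_le (f z / 2 - c)
    rw [hc] at h1 h2 ⊢
    linarith
  calc ENNReal.ofReal (t * (f x - f z)) - E f
      ≤ ENNReal.ofReal (t * ((g₁ x - g₁ y) + (g₂ y - g₂ z))) - (E g₁ + E g₂) :=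
        tsub_le_tsub (ENNReal.ofReal_le_ofReal (by nlinarith)) hEsum
    _ = ENNReal.ofReal (t * (g₁ x - g₁ y) + t * (g₂ y - g₂ z)) - (E g₁ + E g₂) := by
        ring_nf
    _ ≤ (ENNReal.ofReal (t * (g₁ x - g₁ y)) + ENNReal.ofReal (t * (g₂ y - g₂ z)))
          - (E g₁ + E g₂) := tsub_le_tsub_right ENNReal.ofReal_add_le _
    _ ≤ (ENNReal.ofReal (t * (g₁ x - g₁ y)) - E g₁)
          + (ENNReal.ofReal (t * (g₂ y - g₂ z)) - E g₂) := tsub_add_tsub_le'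
    _ ≤ tRes E t x y + tRes E t y z :=
        add_le_add (le_iSup (fun g : X → ℝ => ENNReal.ofReal (t * (g x - g y)) - E g) g₁)
          (le_iSup (fun g : X → ℝ => ENNReal.ofReal (t * (g y - g z)) - E g) g₂)

lemma tRes_symm_le_aux {X : Type*} (E : (X → ℝ) → ℝ≥0∞) (hsym : ∀ f : X → ℝ, E (-f) = E f)
    (t : ℝ) (x y : X) : tRes E t x y ≤ tRes E t y x := by
  refine iSup_le fun f => ?_
  have h : ENNReal.ofReal (t * (f x - f y)) - E f
      = ENNReal.ofReal (t * ((-f) y - (-f) x)) - E (-f) := by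
    rw [hsym]
    congr 2
    simp only [Pi.neg_apply]; ring
  rw [h]
  exact le_iSup (fun g : X → ℝ => ENNReal.ofReal (t * (g y - g x)) - E g) (-f)

lemma tRes_ne_top_aux {X : Type*} (E : (X → ℝ) → ℝ≥0∞) (hE : IsNonlinearResistanceForm E)
    (hN : Nabla2 E) (t : ℝ) (ht : 0 < t) (x y : X) : tRes E t x y ≠ ⊤ := by
  obtain ⟨hconv, h0, _, hres, _⟩ := hE
  obtain ⟨K, hK2, hK⟩ := hN
  have hKR : (2:ℝ) < (K:ℝ) := by exact_mod_cast hK2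
  set R : ℝ := (eRes E x y).toReal with hR
  have hR0 : 0 ≤ R := ENNReal.toReal_nonneg
  have hresR : ∀ f : X → ℝ, E f ≤ 1 → f x - f y ≤ R := by
    intro f hf
    have h1 : ENNReal.ofReal (f x - f y) ≤ eRes E x y :=
      le_iSup₂ (f := fun (f : X → ℝ) (_ : E f ≤ 1) => ENNReal.ofReal (f x - f y)) f hf
    rw [← ENNReal.ofReal_toReal (hres x y)] at h1
    rcases le_or_gt (f x - f y) 0 with h|h
    · linarith
    · exact (ENNReal.ofReal_le_ofReal_iff hR0).mp h1
  -- choose N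
  obtain ⟨N, hNlt⟩ := pow_unbounded_of_one_lt (2 * t * R) (by linarith : (1:ℝ) < (K:ℝ)/2)
  have hNbound : ∀ n, N ≤ n → t * 2^(n+1) * R ≤ (K:ℝ)^n := by
    intro n hn
    have h1 : ((K:ℝ)/2)^N ≤ ((K:ℝ)/2)^n := pow_le_pow_right₀ (by linarith) hn
    have h2 : (0:ℝ) < 2^n := by positivity
    have h3 : (2 * t * R) * 2^n ≤ ((K:ℝ)/2)^n * 2^n := by nlinarith
    have h4 : ((K:ℝ)/2)^n * 2^n = (K:ℝ)^n := by
      rw [div_pow]; field_simp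
    calc t * 2^(n+1) * R = (2 * t * R) * 2^n := by rw [pow_succ]; ring
    _ ≤ ((K:ℝ)/2)^n * 2^n := h3
    _ = (K:ℝ)^n := h4
  have hcase1 : ∀ n : ℕ, ∀ f : X → ℝ, E f ≠ ⊤ → E f ≤ (K:ℝ≥0∞)^n → f x - f y ≤ 2^n * R := by
    intro n f hf hfn
    obtain ⟨hfin, hle⟩ := scale_lemma hconv h0 hK n f hf
    have hKn0 : (K:ℝ≥0∞)^n ≠ 0 := pow_ne_zero _ (by
      simp only [ne_eq, ENNReal.coe_eq_zero]
      exact ne_of_gt (lt_trans (by norm_num) hK2))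
    have hKnt : (K:ℝ≥0∞)^n ≠ ⊤ := ENNReal.pow_ne_top ENNReal.coe_ne_top
    have hmul : (K:ℝ≥0∞)^n * E (((2:ℝ)^n)⁻¹ • f) ≤ (K:ℝ≥0∞)^n * 1 := by
      rw [mul_one]; exact hle.trans hfn
    have hle1 : E (((2:ℝ)^n)⁻¹ • f) ≤ 1 :=
      (ENNReal.mul_le_mul_iff_right hKn0 hKnt).mp hmul
    have hfr := hresR _ hle1
    simp only [Pi.smul_apply, smul_eq_mul] at hfr
    have h2n : (0:ℝ) < 2^n := by positivity
    have : ((2:ℝ)^n)⁻¹ * (f x - f y) ≤ R := by rw [mul_sub] at *; linarith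
    calc f x - f y = 2^n * (((2:ℝ)^n)⁻¹ * (f x - f y)) := by field_simp
    _ ≤ 2^n * R := by nlinarith
  have hmain : tRes E t x y ≤ ENNReal.ofReal (t * 2^N * R) := by
    refine iSup_le fun f => ?_
    by_cases hf : E f = ⊤
    · simp [hf]
    · have hex : ∃ m, E f ≤ (K:ℝ≥0∞)^m := by
        obtain ⟨m, hm⟩ := pow_unbounded_of_one_lt ((E f).toReal) (by linarith : (1:ℝ) < (K:ℝ))
        refine ⟨m, ?_⟩
        rw [← ENNReal.ofReal_toReal hf]
        calc ENNReal.ofReal (E f).toReal ≤ ENNReal.ofReal ((K:ℝ)^m) :=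
              ENNReal.ofReal_le_ofReal hm.le
        _ = (K:ℝ≥0∞)^m := by
              rw [ENNReal.ofReal_pow K.coe_nonneg, ENNReal.ofReal_coe_nnreal]
      rcases le_or_gt (Nat.find hex) N with hle|hlt
      · have hEfN : E f ≤ (K:ℝ≥0∞)^N := by
          refine (Nat.find_spec hex).trans ?_
          exact pow_le_pow_right₀ (by exact_mod_cast le_of_lt (lt_trans (by norm_num) hK2) : (1:ℝ≥0∞) ≤ K) hle
        have hxy := hcase1 N f hf hEfN
        calc ENNReal.ofReal (t * (f x - f y)) - E f ≤ ENNReal.ofReal (t * (f x - f y)) :=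
              tsub_le_self
        _ ≤ ENNReal.ofReal (t * 2^N * R) := ENNReal.ofReal_le_ofReal (by nlinarith)
      · have hpos : 0 < Nat.find hex := lt_of_le_of_lt (Nat.zero_le N) hlt
        obtain ⟨n, hn⟩ := Nat.exists_eq_succ_of_ne_zero hpos.ne'
        have hnN : N ≤ n := by omega
        have hspec := Nat.find_spec hex
        rw [hn] at hspec
        have hlow : (K:ℝ≥0∞)^n < E f := by
          have := Nat.find_min hex (by omega : n < Nat.find hex)
          exact lt_of_not_ge this
        have hxy := hcase1 (n+1) f hf hspec
        have hzero : ENNReal.ofReal (t * (f x - f y)) ≤ E f := by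
          calc ENNReal.ofReal (t * (f x - f y)) ≤ ENNReal.ofReal ((K:ℝ)^n) := by
                refine ENNReal.ofReal_le_ofReal ?_
                have hb := hNbound n hnN
                nlinarith
          _ = (K:ℝ≥0∞)^n := by rw [ENNReal.ofReal_pow K.coe_nonneg, ENNReal.ofReal_coe_nnreal]
          _ ≤ E f := hlow.le
        rw [tsub_eq_zero_of_le hzero]
        exact zero_le
  exact ne_top_of_le_ne_top ENNReal.ofReal_ne_top hmain

lemma tRes_self_aux {X : Type*} (E : (X → ℝ) → ℝ≥0∞) (t : ℝ) (x : X) : tRes E t x x = 0 := by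
  simp [tRes, zero_tsub]

/-- **Triangle inequality for the resistance** (Theorem 4.12): for a nonlinear resistance
form the `t`-resistance satisfies the triangle inequality; it is symmetric if `E` is
symmetric and finite if `E` satisfies the `∇₂`-condition; in particular, for symmetric `E`
satisfying the `∇₂`-condition, `R_t` is a pseudometric. -/
theorem tRes_pseudometric {X : Type*} [Nonempty X] (E : (X → ℝ) → ℝ≥0∞)
    (hE : IsNonlinearResistanceForm E) :
    (∀ t : ℝ, 0 < t → ∀ x y z : X, tRes E t x z ≤ tRes E t x y + tRes E t y z) ∧
    ((∀ f : X → ℝ, E (-f) = E f) →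
      ∀ t : ℝ, 0 < t → ∀ x y : X, tRes E t x y = tRes E t y x) ∧
    (Nabla2 E → ∀ t : ℝ, 0 < t → ∀ x y : X, tRes E t x y ≠ ⊤) ∧
    ((∀ f : X → ℝ, E (-f) = E f) → Nabla2 E → ∀ t : ℝ, 0 < t →
      (∀ x : X, tRes E t x x = 0) ∧
      (∀ x y : X, tRes E t x y = tRes E t y x ∧ tRes E t x y ≠ ⊤) ∧
      (∀ x y z : X, tRes E t x z ≤ tRes E t x y + tRes E t y z)) := by
  refine ⟨tRes_triangle_aux E hE, ?_, ?_, ?_⟩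
  · intro hsym t ht x y
    exact le_antisymm (tRes_symm_le_aux E hsym t x y) (tRes_symm_le_aux E hsym t y x)
  · intro hN t ht x y
    exact tRes_ne_top_aux E hE hN t ht x y
  · intro hsym hN t ht
    refine ⟨fun x => tRes_self_aux E t x, fun x y => ⟨?_, ?_⟩, fun x y z => tRes_triangle_aux E hE t ht x y z⟩
    · exact le_antisymm (tRes_symm_le_aux E hsym t x y) (tRes_symm_le_aux E hsym t y x)
    · exact tRes_ne_top_aux E hE hN t ht x y
end
end

section
/- Let X be a nonempty set, 1 < p < ∞, and let q satisfy 1/p + 1/q = 1. If E is a symmetric, positively p-homogeneous nonlinear resistance form on X, then the function (x,y) ↦ R(x,y)^q, where R is the elementary resistance, is a pseudometric on X. -/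
open scoped ENNReal NNReal

noncomputable section

/-! ### Auxiliary lemmas -/

section AuxLemmas
variable {X : Type*} {E : (X → ℝ) → ℝ≥0∞}

private lemma le_eRes' {f : X → ℝ} (hf : E f ≤ 1) (x y : X) :
    ENNReal.ofReal (f x - f y) ≤ eRes E x y :=
  le_iSup₂_of_le f hf le_rfl

/-- Scaling bound: `g x - g y ≤ R(x,y) (E g)^{1/p}` via `p`-homogeneity. -/
private lemma scale_bound {p : ℝ} (hp : 0 < p) (hhom : PosHomogeneous p E)
    (x y : X) (hfin : eRes E x y ≠ ⊤) (g : X → ℝ) (hg : E g ≠ ⊤) :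
    ENNReal.ofReal (g x - g y) ≤ eRes E x y * (E g) ^ (p⁻¹ : ℝ) := by
  rcases eq_or_ne (E g) 0 with h0 | h0
  · have hle : g x - g y ≤ 0 := by
      by_contra hlt
      push_neg at hlt
      obtain ⟨n, hn⟩ := exists_nat_gt ((eRes E x y).toReal / (g x - g y))
      have hEn : E ((n : ℝ) • g) ≤ 1 := by
        rw [hhom _ (Nat.cast_nonneg n) g, h0, mul_zero]; exact zero_le
      have h1 : ENNReal.ofReal ((n : ℝ) * (g x - g y)) ≤ eRes E x y := by
        have := le_eRes' hEn x y
        simpa [Pi.smul_apply, smul_eq_mul, mul_sub] using this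
      have h2 : (n : ℝ) * (g x - g y) ≤ (eRes E x y).toReal := by
        have h3 := ENNReal.toReal_mono hfin h1
        rwa [ENNReal.toReal_ofReal (by positivity)] at h3
      have h4 := (div_lt_iff₀ hlt).mp hn
      nlinarith
    rw [ENNReal.ofReal_of_nonpos hle]
    exact zero_le
  · set e := (E g).toReal with he_def
    have hepos : 0 < e := ENNReal.toReal_pos h0 hg
    set lam := e ^ (-(p⁻¹ : ℝ)) with hlam
    have hlampos : 0 < lam := Real.rpow_pos_of_pos hepos _
    have hlamp : lam ^ p = e⁻¹ := by
      rw [hlam, ← Real.rpow_mul hepos.le, neg_mul, inv_mul_cancel₀ hp.ne', Real.rpow_neg_one]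
    have hEl : E (lam • g) ≤ 1 := by
      rw [hhom lam hlampos.le g, hlamp, ENNReal.ofReal_inv_of_pos hepos,
        ENNReal.ofReal_toReal hg, ENNReal.inv_mul_cancel h0 hg]
    have h1 : ENNReal.ofReal (lam * (g x - g y)) ≤ eRes E x y := by
      have := le_eRes' hEl x y
      simpa [Pi.smul_apply, smul_eq_mul, mul_sub] using this
    rcases le_or_gt (g x - g y) 0 with hd | hd
    · rw [ENNReal.ofReal_of_nonpos hd]; exact zero_le
    · have hmul : lam * e ^ (p⁻¹ : ℝ) = 1 := by
        rw [hlam, ← Real.rpow_add hepos, neg_add_cancel, Real.rpow_zero]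
      have heq : ENNReal.ofReal (g x - g y)
          = ENNReal.ofReal (lam * (g x - g y)) * ENNReal.ofReal (e ^ (p⁻¹ : ℝ)) := by
        rw [← ENNReal.ofReal_mul (by positivity)]
        congr 1
        rw [mul_comm lam, mul_assoc, hmul, mul_one]
      rw [heq]
      have hpow : ENNReal.ofReal (e ^ (p⁻¹ : ℝ)) = (E g) ^ (p⁻¹ : ℝ) := by
        rw [← ENNReal.ofReal_rpow_of_pos hepos, ENNReal.ofReal_toReal hg]
      rw [hpow]
      exact mul_le_mul_left h1 _

end AuxLemmas

section Cut
variable (c : ℝ)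

/-- The normal contraction used to cut a function at level `c` "relative to the point at
infinity": `s ↦ (|2s - c| - |c|)/2`. -/
private noncomputable def cutC (s : ℝ) : ℝ := (|2*s - c| - |c|)/2

private lemma cutC_zero : cutC c 0 = 0 := by simp [cutC]

private lemma cutC_lip : LipschitzWith 1 (cutC c) := by
  refine LipschitzWith.of_dist_le_mul fun a b => ?_
  rw [Real.dist_eq, Real.dist_eq, NNReal.coe_one, one_mul]
  have h1 : cutC c a - cutC c b = (|2*a - c| - |2*b - c|)/2 := by
    simp only [cutC]; ring
  rw [h1, abs_div, show |(2:ℝ)| = 2 by norm_num, div_le_iff₀ (by norm_num : (0:ℝ) < 2)]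
  have h2 := abs_abs_sub_abs_le_abs_sub (2*a - c) (2*b - c)
  have h3 : 2*a - c - (2*b - c) = 2*(a - b) := by ring
  rw [h3, abs_mul, show |(2:ℝ)| = 2 by norm_num] at h2
  linarith

private lemma cut_key1 (t : ℝ) : t/2 + cutC c (t/2) = max t c - max c 0 := by
  unfold cutC
  rw [show 2*(t/2) - c = t - c by ring]
  rcases le_total t c with h1 | h1
  · rw [abs_of_nonpos (by linarith), max_eq_right h1]
    rcases le_total c 0 with h2 | h2
    · rw [abs_of_nonpos h2, max_eq_right h2]; ring
    · rw [abs_of_nonneg h2, max_eq_left h2]; ring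
  · rw [abs_of_nonneg (by linarith), max_eq_left h1]
    rcases le_total c 0 with h2 | h2
    · rw [abs_of_nonpos h2, max_eq_right h2]; ring
    · rw [abs_of_nonneg h2, max_eq_left h2]; ring

private lemma cut_key2 (t : ℝ) : t/2 - cutC c (t/2) = min t c + max (-c) 0 := by
  unfold cutC
  rw [show 2*(t/2) - c = t - c by ring]
  rcases le_total t c with h1 | h1
  · rw [abs_of_nonpos (by linarith), min_eq_left h1]
    rcases le_total c 0 with h2 | h2
    · rw [abs_of_nonpos h2, max_eq_left (by linarith : (0:ℝ) ≤ -c)]; ring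
    · rw [abs_of_nonneg h2, max_eq_right (by linarith : -c ≤ (0:ℝ))]; ring
  · rw [abs_of_nonneg (by linarith), min_eq_right h1]
    rcases le_total c 0 with h2 | h2
    · rw [abs_of_nonpos h2, max_eq_left (by linarith : (0:ℝ) ≤ -c)]; ring
    · rw [abs_of_nonneg h2, max_eq_right (by linarith : -c ≤ (0:ℝ))]; ring

end Cut

/-- **`R^q` is a pseudometric for `p`-homogeneous forms** (Corollary 4.13). -/
theorem eRes_pow_q_pseudometric {X : Type*} [Nonempty X] (E : (X → ℝ) → ℝ≥0∞)
    (p q : ℝ) (hp : 1 < p) (hq : p⁻¹ + q⁻¹ = 1)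
    (hE : IsNonlinearResistanceForm E) (hsym : ∀ f : X → ℝ, E (-f) = E f)
    (hhom : PosHomogeneous p E) :
    (∀ x : X, eRes E x x ^ q = 0) ∧
    (∀ x y : X, eRes E x y ^ q = eRes E y x ^ q ∧ eRes E x y ^ q ≠ ⊤) ∧
    (∀ x y z : X, eRes E x z ^ q ≤ eRes E x y ^ q + eRes E y z ^ q) := by
  obtain ⟨hconv, hE0, hlsc, hfin, hop⟩ := hE
  have hpq : Real.HolderConjugate p q := Real.holderConjugate_iff.mpr ⟨hp, hq⟩
  have hq0 : 0 < q := hpq.symm.pos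
  have hp0 : 0 < p := hpq.pos
  have hdir : ∀ x y : X, eRes E x y ≤ eRes E y x := by
    intro x y
    refine iSup₂_le fun f hf => ?_
    have hf' : E (-f) ≤ 1 := by rw [hsym f]; exact hf
    have h := le_eRes' hf' y x
    have heq : (-f) y - (-f) x = f x - f y := by simp only [Pi.neg_apply]; ring
    rwa [heq] at h
  refine ⟨?_, ?_, ?_⟩
  · intro x
    have h0 : eRes E x x = 0 := by
      refine le_antisymm (iSup₂_le fun f hf => ?_) (zero_le)
      simp
    rw [h0, ENNReal.zero_rpow_of_pos hq0]
  · intro x y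
    exact ⟨by rw [le_antisymm (hdir x y) (hdir y x)],
      ENNReal.rpow_ne_top_of_nonneg hq0.le (hfin x y)⟩
  · intro x y z
    set A := eRes E x y with hA
    set B := eRes E y z with hB
    suffices hmain : eRes E x z ≤ (A ^ q + B ^ q) ^ (1/q : ℝ) by
      calc eRes E x z ^ q ≤ ((A ^ q + B ^ q) ^ (1/q : ℝ)) ^ q :=
            ENNReal.rpow_le_rpow hmain hq0.le
        _ = A ^ q + B ^ q := by
            rw [← ENNReal.rpow_mul, one_div, inv_mul_cancel₀ hq0.ne', ENNReal.rpow_one]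
    refine iSup₂_le fun f hf => ?_
    have hopC := hop (cutC (f y)) (cutC_lip (f y)) (cutC_zero (f y))
    set c := f y with hc
    set F : X → ℝ := fun w => f w / 2 with hF
    set f₁ : X → ℝ := fun w => max (f w) c - max c 0 with hf₁
    set f₂ : X → ℝ := fun w => min (f w) c + max (-c) 0 with hf₂
    have e1 : F + cutC c ∘ F = f₁ := funext fun w => cut_key1 c (f w)
    have e2 : F - cutC c ∘ F = f₂ := funext fun w => cut_key2 c (f w)
    have e3 : F + F = f := funext fun w => by
      simp only [Pi.add_apply, hF]; ring
    have e4 : F - F = (0 : X → ℝ) := sub_self F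
    have hsplit : E f₁ + E f₂ ≤ E f := by
      have h := hopC F F
      rwa [e1, e2, e3, e4, hE0, add_zero] at h
    have hEf1 : E f₁ ≤ 1 := le_trans (le_trans le_self_add hsplit) hf
    have hEf2 : E f₂ ≤ 1 := le_trans (le_trans le_add_self hsplit) hf
    have hEf1t : E f₁ ≠ ⊤ := ne_top_of_le_ne_top ENNReal.one_ne_top hEf1
    have hEf2t : E f₂ ≠ ⊤ := ne_top_of_le_ne_top ENNReal.one_ne_top hEf2
    have hb1 : ENNReal.ofReal (f x - c) ≤ A * (E f₁) ^ (p⁻¹ : ℝ) := by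
      refine le_trans ?_ (scale_bound hp0 hhom x y (hfin x y) f₁ hEf1t)
      apply ENNReal.ofReal_le_ofReal
      have h5 : f₁ y = c - max c 0 := by simp [hf₁, ← hc]
      have h6 : f₁ x = max (f x) c - max c 0 := rfl
      have h7 := le_max_left (f x) c
      rw [h5, h6]; linarith
    have hb2 : ENNReal.ofReal (c - f z) ≤ B * (E f₂) ^ (p⁻¹ : ℝ) := by
      refine le_trans ?_ (scale_bound hp0 hhom y z (hfin y z) f₂ hEf2t)
      apply ENNReal.ofReal_le_ofReal
      have h5 : f₂ y = c + max (-c) 0 := by simp [hf₂, ← hc]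
      have h6 : f₂ z = min (f z) c + max (-c) 0 := rfl
      have h7 := min_le_left (f z) c
      rw [h5, h6]; linarith
    have hsum : ENNReal.ofReal (f x - f z)
        ≤ A * (E f₁) ^ (p⁻¹ : ℝ) + B * (E f₂) ^ (p⁻¹ : ℝ) := by
      calc ENNReal.ofReal (f x - f z)
          = ENNReal.ofReal ((f x - c) + (c - f z)) := by ring_nf
        _ ≤ ENNReal.ofReal (f x - c) + ENNReal.ofReal (c - f z) := ENNReal.ofReal_add_le
        _ ≤ _ := add_le_add hb1 hb2
    have hqp : Real.HolderConjugate q p := hpq.symm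
    have holder := ENNReal.inner_le_Lp_mul_Lq (s := (Finset.univ : Finset (Fin 2)))
      ![A, B] ![(E f₁) ^ (p⁻¹ : ℝ), (E f₂) ^ (p⁻¹ : ℝ)] hqp
    simp only [Fin.sum_univ_two, Matrix.cons_val_zero, Matrix.cons_val_one,
      Matrix.head_cons] at holder
    have hs : ((E f₁) ^ (p⁻¹ : ℝ)) ^ p = E f₁ := by
      rw [← ENNReal.rpow_mul, inv_mul_cancel₀ hp0.ne', ENNReal.rpow_one]
    have ht : ((E f₂) ^ (p⁻¹ : ℝ)) ^ p = E f₂ := by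
      rw [← ENNReal.rpow_mul, inv_mul_cancel₀ hp0.ne', ENNReal.rpow_one]
    rw [hs, ht] at holder
    have hend : (E f₁ + E f₂) ^ (1/p : ℝ) ≤ 1 :=
      ENNReal.rpow_le_one (hsplit.trans hf) (by positivity)
    calc ENNReal.ofReal (f x - f z)
        ≤ A * (E f₁) ^ (p⁻¹ : ℝ) + B * (E f₂) ^ (p⁻¹ : ℝ) := hsum
      _ ≤ (A ^ q + B ^ q) ^ (1/q : ℝ) * (E f₁ + E f₂) ^ (1/p : ℝ) := holder
      _ ≤ (A ^ q + B ^ q) ^ (1/q : ℝ) * 1 := mul_le_mul_right hend _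
      _ = (A ^ q + B ^ q) ^ (1/q : ℝ) := mul_one _
end
end

section
/- Let E₁, E₂ be nonlinear resistance forms on disjoint nonempty sets X₁, X₂ with ℝ·1 ⊆ ker E_i (constants have zero energy), and fix ξ₁ ∈ X₁, ξ₂ ∈ X₂. Define E : F(X₁ ∪ X₂) → [0,∞] by E(f) = E₁(f|_{X₁}) + E₂(f|_{X₂}) if f(ξ₁) = f(ξ₂), and E(f) = ∞ otherwise. Then E is a nonlinear resistance form on X₁ ∪ X₂ with ℝ·1 ⊆ ker E, and for all x₁ ∈ X₁, x₂ ∈ X₂ and t > 0 the t-resistance is additive: R_{t,E}(x₁,x₂) = R_{t,E₁}(x₁,ξ₁) + R_{t,E₂}(ξ₂,x₂). -/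
open scoped ENNReal NNReal

noncomputable section

open Filter

/-- translation by constants decreases energy, given convexity, lsc, constants zero. -/
lemma shift_le_aux {X : Type*} (E : (X → ℝ) → ℝ≥0∞)
    (hconv : ConvexENNReal E) (hlsc : LowerSemicontinuous E)
    (hc : ∀ c : ℝ, E (fun _ => c) = 0) (f : X → ℝ) (c : ℝ) :
    E (fun x => f x + c) ≤ E f := by
  by_contra hlt
  push_neg at hlt
  obtain ⟨y, hy1, hy2⟩ := exists_between hlt
  have hev : ∀ᶠ g in nhds (fun x => f x + c), y < E g := hlsc _ y hy2
  have htend : Tendsto (fun n : ℕ => fun x => (1 - 1/(n+1:ℝ)) * f x + c) atTop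
      (nhds (fun x => f x + c)) := by
    rw [tendsto_pi_nhds]
    intro x
    have h1 : Tendsto (fun n : ℕ => (1:ℝ)/(n+1)) atTop (nhds 0) :=
      tendsto_one_div_add_atTop_nhds_zero_nat
    have h2 : Tendsto (fun n : ℕ => (1 - 1/(n+1:ℝ)) * f x + c) atTop
        (nhds ((1 - 0) * f x + c)) :=
      ((tendsto_const_nhds.sub h1).mul tendsto_const_nhds).add tendsto_const_nhds
    simpa using h2
  obtain ⟨n, hn⟩ := (htend.eventually hev).exists
  have hb : (0:ℝ) < 1/(n+1:ℝ) := by positivity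
  have hs : (0:ℝ) ≤ 1 - 1/(n+1:ℝ) := by
    have : (1:ℝ)/(n+1) ≤ 1 := by
      rw [div_le_one (by positivity)]; linarith [Nat.cast_nonneg (α := ℝ) n]
    linarith
  have key := hconv f (fun _ => c / (1/(n+1:ℝ))) (1 - 1/(n+1:ℝ)) (1/(n+1:ℝ)) hs hb.le
    (by ring)
  have heq : ((1 - 1/(n+1:ℝ)) • f + (1/(n+1:ℝ)) • fun _ => c / (1/(n+1:ℝ)))
      = fun x => (1 - 1/(n+1:ℝ)) * f x + c := by
    funext x
    simp only [Pi.add_apply, Pi.smul_apply, smul_eq_mul]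
    field_simp
  rw [heq, hc] at key
  have hle : E (fun x => (1 - 1/(n+1:ℝ)) * f x + c) ≤ E f := by
    refine key.trans ?_
    rw [mul_zero, add_zero]
    calc ENNReal.ofReal (1 - 1/(n+1:ℝ)) * E f ≤ 1 * E f := by
          gcongr
          exact ENNReal.ofReal_le_one.mpr (by linarith)
      _ = E f := one_mul _
  exact absurd (hn.trans_le (hle.trans hy1.le)) (lt_irrefl y)

/-- **Additivity over serial circuits I** (Theorem 4.16): gluing two nonlinear resistance
forms by identifying the marked points `ξ₁, ξ₂` yields a nonlinear resistance form whose
`t`-resistance is additive over the serial circuit. -/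
theorem additivity_serial_circuits_I {X₁ X₂ : Type*}
    (E₁ : (X₁ → ℝ) → ℝ≥0∞) (E₂ : (X₂ → ℝ) → ℝ≥0∞)
    (hE₁ : IsNonlinearResistanceForm E₁) (hE₂ : IsNonlinearResistanceForm E₂)
    (hc₁ : ∀ c : ℝ, E₁ (fun _ => c) = 0) (hc₂ : ∀ c : ℝ, E₂ (fun _ => c) = 0)
    (ξ₁ : X₁) (ξ₂ : X₂)
    (E : ((X₁ ⊕ X₂) → ℝ) → ℝ≥0∞)
    (hE : ∀ f : (X₁ ⊕ X₂) → ℝ,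
      E f = if f (Sum.inl ξ₁) = f (Sum.inr ξ₂)
        then E₁ (f ∘ Sum.inl) + E₂ (f ∘ Sum.inr) else ⊤) :
    IsNonlinearResistanceForm E ∧ (∀ c : ℝ, E (fun _ => c) = 0) ∧
    (∀ (x₁ : X₁) (x₂ : X₂) (t : ℝ), 0 < t →
      tRes E t (Sum.inl x₁) (Sum.inr x₂) = tRes E₁ t x₁ ξ₁ + tRes E₂ t ξ₂ x₂) := by
  obtain ⟨hconv₁, hz₁, hlsc₁, hres₁, hop₁⟩ := hE₁
  obtain ⟨hconv₂, hz₂, hlsc₂, hres₂, hop₂⟩ := hE₂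
  have hEeq : ∀ f : (X₁ ⊕ X₂) → ℝ, f (Sum.inl ξ₁) = f (Sum.inr ξ₂) →
      E f = E₁ (f ∘ Sum.inl) + E₂ (f ∘ Sum.inr) := by
    intro f h; rw [hE f, if_pos h]
  have hfin : ∀ f : (X₁ ⊕ X₂) → ℝ, E f ≠ ⊤ →
      f (Sum.inl ξ₁) = f (Sum.inr ξ₂) ∧ E f = E₁ (f ∘ Sum.inl) + E₂ (f ∘ Sum.inr) := by
    intro f hf
    rw [hE f] at hf
    by_cases h : f (Sum.inl ξ₁) = f (Sum.inr ξ₂)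
    · exact ⟨h, hEeq f h⟩
    · rw [if_neg h] at hf; exact absurd rfl hf
  have hconst : ∀ c : ℝ, E (fun _ => c) = 0 := by
    intro c
    rw [hE, if_pos rfl]
    show E₁ (fun _ => c) + E₂ (fun _ => c) = 0
    rw [hc₁, hc₂, add_zero]
  -- convexity
  have hcv : ConvexENNReal E := by
    intro x y a b ha hb hab
    rcases eq_or_lt_of_le ha with ha0 | ha0
    · have hb1 : b = 1 := by linarith
      subst hb1
      rw [← ha0]
      simp [ENNReal.ofReal_one]
    rcases eq_or_lt_of_le hb with hb0 | hb0
    · have ha1 : a = 1 := by linarith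
      subst ha1
      rw [← hb0]
      simp [ENNReal.ofReal_one]
    by_cases hx : E x = ⊤
    · rw [hx, ENNReal.mul_top (by simp [ENNReal.ofReal_eq_zero]; linarith)]
      simp
    by_cases hy : E y = ⊤
    · rw [hy, ENNReal.mul_top (by simp [ENNReal.ofReal_eq_zero]; linarith)]
      simp
    obtain ⟨hx1, hx2⟩ := hfin x hx
    obtain ⟨hy1, hy2⟩ := hfin y hy
    have hcond : (a • x + b • y) (Sum.inl ξ₁) = (a • x + b • y) (Sum.inr ξ₂) := by
      simp [hx1, hy1]
    rw [hEeq _ hcond, hx2, hy2]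
    have e1 : (a • x + b • y) ∘ Sum.inl = a • (x ∘ Sum.inl) + b • (y ∘ Sum.inl) := rfl
    have e2 : (a • x + b • y) ∘ Sum.inr = a • (x ∘ Sum.inr) + b • (y ∘ Sum.inr) := rfl
    rw [e1, e2]
    calc E₁ (a • (x ∘ Sum.inl) + b • (y ∘ Sum.inl)) + E₂ (a • (x ∘ Sum.inr) + b • (y ∘ Sum.inr))
        ≤ (ENNReal.ofReal a * E₁ (x ∘ Sum.inl) + ENNReal.ofReal b * E₁ (y ∘ Sum.inl))
          + (ENNReal.ofReal a * E₂ (x ∘ Sum.inr) + ENNReal.ofReal b * E₂ (y ∘ Sum.inr)) :=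
          add_le_add (hconv₁ _ _ a b ha hb hab) (hconv₂ _ _ a b ha hb hab)
      _ = ENNReal.ofReal a * (E₁ (x ∘ Sum.inl) + E₂ (x ∘ Sum.inr))
          + ENNReal.ofReal b * (E₁ (y ∘ Sum.inl) + E₂ (y ∘ Sum.inr)) := by ring
  -- zero
  have hz : E 0 = 0 := by
    have h0 : (0 : (X₁ ⊕ X₂) → ℝ) = fun _ => (0:ℝ) := rfl
    rw [h0]; exact hconst 0
  -- lower semicontinuity
  have hlsc : LowerSemicontinuous E := by
    have hrepr : E = fun f => (E₁ (f ∘ Sum.inl) + E₂ (f ∘ Sum.inr)) +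
        (if f (Sum.inl ξ₁) = f (Sum.inr ξ₂) then 0 else ⊤) := by
      funext f
      rw [hE f]
      split_ifs with h
      · rw [add_zero]
      · rw [add_top]
    rw [hrepr]
    have hcont1 : Continuous (fun f : (X₁ ⊕ X₂) → ℝ => f ∘ Sum.inl) :=
      continuous_pi fun i => continuous_apply _
    have hcont2 : Continuous (fun f : (X₁ ⊕ X₂) → ℝ => f ∘ Sum.inr) :=
      continuous_pi fun i => continuous_apply _
    have l1 : LowerSemicontinuous (fun f : (X₁ ⊕ X₂) → ℝ => E₁ (f ∘ Sum.inl)) := by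
      intro f z hz
      exact (hcont1.tendsto f).eventually (hlsc₁ _ z hz)
    have l2 : LowerSemicontinuous (fun f : (X₁ ⊕ X₂) → ℝ => E₂ (f ∘ Sum.inr)) := by
      intro f z hz
      exact (hcont2.tendsto f).eventually (hlsc₂ _ z hz)
    have l3 : LowerSemicontinuous (fun f : (X₁ ⊕ X₂) → ℝ =>
        (if f (Sum.inl ξ₁) = f (Sum.inr ξ₂) then (0:ℝ≥0∞) else ⊤)) := by
      intro f z hz
      by_cases h : f (Sum.inl ξ₁) = f (Sum.inr ξ₂)
      · simp only [if_pos h] at hz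
        exact absurd hz (by simp)
      · have hopen : IsOpen {g : (X₁ ⊕ X₂) → ℝ | g (Sum.inl ξ₁) ≠ g (Sum.inr ξ₂)} :=
          isOpen_ne_fun (continuous_apply _) (continuous_apply _)
        simp only [if_neg h] at hz
        filter_upwards [hopen.mem_nhds h] with g hg
        simp only [if_neg hg]
        exact hz
    exact (l1.add l2).add l3
  -- admissible functions
  have hadm : ∀ f : (X₁ ⊕ X₂) → ℝ, E f ≤ 1 →
      E₁ (f ∘ Sum.inl) ≤ 1 ∧ E₂ (f ∘ Sum.inr) ≤ 1 ∧ f (Sum.inl ξ₁) = f (Sum.inr ξ₂) := by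
    intro f hf
    have hne : E f ≠ ⊤ := fun h => by rw [h] at hf; exact absurd hf (by simp)
    obtain ⟨h1, h2⟩ := hfin f hne
    rw [h2] at hf
    exact ⟨le_self_add.trans hf, le_add_self.trans hf, h1⟩
  -- finiteness of elementary resistance
  have hres : ∀ x y : X₁ ⊕ X₂, eRes E x y ≠ ⊤ := by
    intro x y
    rcases x with x | x <;> rcases y with y | y
    · refine ne_top_of_le_ne_top (hres₁ x y) ?_
      exact iSup₂_le fun f hf => le_iSup₂_of_le (f ∘ Sum.inl) (hadm f hf).1 le_rfl
    · refine ne_top_of_le_ne_top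
        (ENNReal.add_ne_top.mpr ⟨hres₁ x ξ₁, hres₂ ξ₂ y⟩) ?_
      refine iSup₂_le fun f hf => ?_
      obtain ⟨h1, h2, h3⟩ := hadm f hf
      have hsp : f (Sum.inl x) - f (Sum.inr y)
          = (f (Sum.inl x) - f (Sum.inl ξ₁)) + (f (Sum.inr ξ₂) - f (Sum.inr y)) := by
        rw [h3]; ring
      rw [hsp]
      refine ENNReal.ofReal_add_le.trans ?_
      exact add_le_add (le_iSup₂_of_le (f ∘ Sum.inl) h1 le_rfl)
        (le_iSup₂_of_le (f ∘ Sum.inr) h2 le_rfl)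
    · refine ne_top_of_le_ne_top
        (ENNReal.add_ne_top.mpr ⟨hres₂ x ξ₂, hres₁ ξ₁ y⟩) ?_
      refine iSup₂_le fun f hf => ?_
      obtain ⟨h1, h2, h3⟩ := hadm f hf
      have hsp : f (Sum.inr x) - f (Sum.inl y)
          = (f (Sum.inr x) - f (Sum.inr ξ₂)) + (f (Sum.inl ξ₁) - f (Sum.inl y)) := by
        rw [h3]; ring
      rw [hsp]
      refine ENNReal.ofReal_add_le.trans ?_
      exact add_le_add (le_iSup₂_of_le (f ∘ Sum.inr) h2 le_rfl)
        (le_iSup₂_of_le (f ∘ Sum.inl) h1 le_rfl)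
    · refine ne_top_of_le_ne_top (hres₂ x y) ?_
      exact iSup₂_le fun f hf => le_iSup₂_of_le (f ∘ Sum.inr) (hadm f hf).2.1 le_rfl
  -- contractions operate
  have hop : ∀ C : ℝ → ℝ, LipschitzWith 1 C → C 0 = 0 → Operates C E := by
    intro C hC hC0 f g
    by_cases h : E (f + g) + E (f - g) = ⊤
    · rw [h]; exact le_top
    have h1 : E (f + g) ≠ ⊤ := fun hh => h (by rw [hh, top_add])
    have h2 : E (f - g) ≠ ⊤ := fun hh => h (by rw [hh, add_top])
    obtain ⟨ha1, ha2⟩ := hfin _ h1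
    obtain ⟨hb1, hb2⟩ := hfin _ h2
    simp only [Pi.add_apply, Pi.sub_apply] at ha1 hb1
    have hfc : f (Sum.inl ξ₁) = f (Sum.inr ξ₂) := by linarith
    have hgc : g (Sum.inl ξ₁) = g (Sum.inr ξ₂) := by linarith
    have hcond1 : (f + C ∘ g) (Sum.inl ξ₁) = (f + C ∘ g) (Sum.inr ξ₂) := by
      simp only [Pi.add_apply, Function.comp_apply, hfc, hgc]
    have hcond2 : (f - C ∘ g) (Sum.inl ξ₁) = (f - C ∘ g) (Sum.inr ξ₂) := by
      simp only [Pi.sub_apply, Function.comp_apply, hfc, hgc]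
    rw [hEeq _ hcond1, hEeq _ hcond2, ha2, hb2]
    have e1 : (f + C ∘ g) ∘ Sum.inl = (f ∘ Sum.inl) + C ∘ (g ∘ Sum.inl) := rfl
    have e2 : (f + C ∘ g) ∘ Sum.inr = (f ∘ Sum.inr) + C ∘ (g ∘ Sum.inr) := rfl
    have e3 : (f - C ∘ g) ∘ Sum.inl = (f ∘ Sum.inl) - C ∘ (g ∘ Sum.inl) := rfl
    have e4 : (f - C ∘ g) ∘ Sum.inr = (f ∘ Sum.inr) - C ∘ (g ∘ Sum.inr) := rfl
    have e5 : (f + g) ∘ Sum.inl = (f ∘ Sum.inl) + (g ∘ Sum.inl) := rfl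
    have e6 : (f + g) ∘ Sum.inr = (f ∘ Sum.inr) + (g ∘ Sum.inr) := rfl
    have e7 : (f - g) ∘ Sum.inl = (f ∘ Sum.inl) - (g ∘ Sum.inl) := rfl
    have e8 : (f - g) ∘ Sum.inr = (f ∘ Sum.inr) - (g ∘ Sum.inr) := rfl
    rw [e1, e2, e3, e4, e5, e6, e7, e8]
    rw [add_add_add_comm, add_add_add_comm (E₁ _) (E₂ _)]
    exact add_le_add (hop₁ C hC hC0 _ _) (hop₂ C hC hC0 _ _)
  refine ⟨⟨hcv, hz, hlsc, hres, hop⟩, hconst, ?_⟩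
  -- t-resistance additivity
  intro x₁ x₂ t ht
  have hElim : ∀ (g : X₁ → ℝ) (h : X₂ → ℝ), g ξ₁ = h ξ₂ →
      E (Sum.elim g h) = E₁ g + E₂ h := by
    intro g h hgh
    rw [hE]
    simp only [Sum.elim_inl, Sum.elim_inr, if_pos hgh, Sum.elim_comp_inl, Sum.elim_comp_inr]
    exact if_pos hgh
  apply le_antisymm
  · refine iSup_le fun f => ?_
    by_cases hf : E f = ⊤
    · rw [hf, ENNReal.sub_top]; exact zero_le
    obtain ⟨h1, h2⟩ := hfin f hf
    have hsp : t * (f (Sum.inl x₁) - f (Sum.inr x₂))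
        = t * ((f ∘ Sum.inl) x₁ - (f ∘ Sum.inl) ξ₁)
          + t * ((f ∘ Sum.inr) ξ₂ - (f ∘ Sum.inr) x₂) := by
      simp only [Function.comp_apply]
      rw [h1]; ring
    rw [h2, hsp]
    calc ENNReal.ofReal (t * ((f ∘ Sum.inl) x₁ - (f ∘ Sum.inl) ξ₁)
            + t * ((f ∘ Sum.inr) ξ₂ - (f ∘ Sum.inr) x₂))
          - (E₁ (f ∘ Sum.inl) + E₂ (f ∘ Sum.inr))
        ≤ (ENNReal.ofReal (t * ((f ∘ Sum.inl) x₁ - (f ∘ Sum.inl) ξ₁))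
            + ENNReal.ofReal (t * ((f ∘ Sum.inr) ξ₂ - (f ∘ Sum.inr) x₂)))
          - (E₁ (f ∘ Sum.inl) + E₂ (f ∘ Sum.inr)) := by
          gcongr
          exact ENNReal.ofReal_add_le
      _ ≤ (ENNReal.ofReal (t * ((f ∘ Sum.inl) x₁ - (f ∘ Sum.inl) ξ₁)) - E₁ (f ∘ Sum.inl))
          + (ENNReal.ofReal (t * ((f ∘ Sum.inr) ξ₂ - (f ∘ Sum.inr) x₂)) - E₂ (f ∘ Sum.inr)) :=
          add_tsub_add_le_tsub_add_tsub
      _ ≤ tRes E₁ t x₁ ξ₁ + tRes E₂ t ξ₂ x₂ :=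
          add_le_add (le_iSup (fun g => ENNReal.ofReal (t * (g x₁ - g ξ₁)) - E₁ g) (f ∘ Sum.inl))
            (le_iSup (fun h => ENNReal.ofReal (t * (h ξ₂ - h x₂)) - E₂ h) (f ∘ Sum.inr))
  · -- key bounds for single-sided terms
    have key₁ : ∀ g : X₁ → ℝ,
        ENNReal.ofReal (t * (g x₁ - g ξ₁)) - E₁ g ≤ tRes E t (Sum.inl x₁) (Sum.inr x₂) := by
      intro g
      have hsh : E₁ (fun p => g p + (- g ξ₁)) ≤ E₁ g := shift_le_aux E₁ hconv₁ hlsc₁ hc₁ g _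
      have hcond : (fun p => g p + (- g ξ₁)) ξ₁ = (0 : X₂ → ℝ) ξ₂ := by simp
      refine le_trans ?_
        (le_iSup (fun f => ENNReal.ofReal (t * (f (Sum.inl x₁) - f (Sum.inr x₂))) - E f)
          (Sum.elim (fun p => g p + (- g ξ₁)) (0 : X₂ → ℝ)))
      rw [hElim _ _ hcond]
      have hz2 : E₂ (0 : X₂ → ℝ) = 0 := hz₂
      rw [hz2, add_zero]
      have hval : Sum.elim (fun p => g p + (- g ξ₁)) (0 : X₂ → ℝ) (Sum.inl x₁)
          - Sum.elim (fun p => g p + (- g ξ₁)) (0 : X₂ → ℝ) (Sum.inr x₂) = g x₁ - g ξ₁ := by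
        simp; ring
      rw [hval]
      exact tsub_le_tsub le_rfl hsh
    have key₂ : ∀ h : X₂ → ℝ,
        ENNReal.ofReal (t * (h ξ₂ - h x₂)) - E₂ h ≤ tRes E t (Sum.inl x₁) (Sum.inr x₂) := by
      intro h
      have hsh : E₂ (fun p => h p + (- h ξ₂)) ≤ E₂ h := shift_le_aux E₂ hconv₂ hlsc₂ hc₂ h _
      have hcond : (0 : X₁ → ℝ) ξ₁ = (fun p => h p + (- h ξ₂)) ξ₂ := by simp
      refine le_trans ?_
        (le_iSup (fun f => ENNReal.ofReal (t * (f (Sum.inl x₁) - f (Sum.inr x₂))) - E f)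
          (Sum.elim (0 : X₁ → ℝ) (fun p => h p + (- h ξ₂))))
      rw [hElim _ _ hcond]
      have hz1 : E₁ (0 : X₁ → ℝ) = 0 := hz₁
      rw [hz1, zero_add]
      have hval : Sum.elim (0 : X₁ → ℝ) (fun p => h p + (- h ξ₂)) (Sum.inl x₁)
          - Sum.elim (0 : X₁ → ℝ) (fun p => h p + (- h ξ₂)) (Sum.inr x₂) = h ξ₂ - h x₂ := by
        simp; ring
      rw [hval]
      exact tsub_le_tsub le_rfl hsh
    refine ENNReal.iSup_add_iSup_le fun g h => ?_
    by_cases hg : ENNReal.ofReal (t * (g x₁ - g ξ₁)) ≤ E₁ g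
    · rw [tsub_eq_zero_of_le hg, zero_add]; exact key₂ h
    by_cases hh : ENNReal.ofReal (t * (h ξ₂ - h x₂)) ≤ E₂ h
    · rw [tsub_eq_zero_of_le hh, add_zero]; exact key₁ g
    push_neg at hg hh
    have hsh₁ : E₁ (fun p => g p + (- g ξ₁)) ≤ E₁ g := shift_le_aux E₁ hconv₁ hlsc₁ hc₁ g _
    have hsh₂ : E₂ (fun p => h p + (- h ξ₂)) ≤ E₂ h := shift_le_aux E₂ hconv₂ hlsc₂ hc₂ h _
    have hcond : (fun p => g p + (- g ξ₁)) ξ₁ = (fun p => h p + (- h ξ₂)) ξ₂ := by simp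
    refine le_trans ?_
      (le_iSup (fun f => ENNReal.ofReal (t * (f (Sum.inl x₁) - f (Sum.inr x₂))) - E f)
        (Sum.elim (fun p => g p + (- g ξ₁)) (fun p => h p + (- h ξ₂))))
    rw [hElim _ _ hcond]
    have hval : Sum.elim (fun p => g p + (- g ξ₁)) (fun p => h p + (- h ξ₂)) (Sum.inl x₁)
        - Sum.elim (fun p => g p + (- g ξ₁)) (fun p => h p + (- h ξ₂)) (Sum.inr x₂)
        = (g x₁ - g ξ₁) + (h ξ₂ - h x₂) := by
      simp; ring
    rw [hval, mul_add]
    have ha : 0 ≤ t * (g x₁ - g ξ₁) :=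
      (ENNReal.ofReal_pos.mp (zero_le.trans_lt hg)).le
    have hb : 0 ≤ t * (h ξ₂ - h x₂) :=
      (ENNReal.ofReal_pos.mp (zero_le.trans_lt hh)).le
    rw [ENNReal.ofReal_add ha hb]
    set oA := ENNReal.ofReal (t * (g x₁ - g ξ₁)) with hoA
    set oB := ENNReal.ofReal (t * (h ξ₂ - h x₂)) with hoB
    set A' := E₁ (fun p => g p + (- g ξ₁)) with hA'
    set B' := E₂ (fun p => h p + (- h ξ₂)) with hB'
    have e1 : A' ≤ oA := hsh₁.trans hg.le
    have e2 : B' ≤ oB := hsh₂.trans hh.le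
    have hA't : A' ≠ ⊤ := ne_top_of_le_ne_top ENNReal.ofReal_ne_top e1
    have hB't : B' ≠ ⊤ := ne_top_of_le_ne_top ENNReal.ofReal_ne_top e2
    calc (oA - E₁ g) + (oB - E₂ h)
        ≤ (oA - A') + (oB - B') := add_le_add (tsub_le_tsub le_rfl hsh₁) (tsub_le_tsub le_rfl hsh₂)
      _ = (oA + oB) - (A' + B') := by
          have hrw : oA + oB = ((oA - A') + (oB - B')) + (A' + B') := by
            rw [add_add_add_comm, tsub_add_cancel_of_le e1, tsub_add_cancel_of_le e2]
          rw [hrw, ENNReal.add_sub_cancel_right (ENNReal.add_ne_top.mpr ⟨hA't, hB't⟩)]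
end
end

section
/- Let X be a nonempty set, 1 < p < ∞, and let E : F(X) → [0,∞] satisfy the generalized p-contraction property. Then every normal contraction operates on E, i.e., for every 1-Lipschitz map C : ℝ → ℝ with C(0) = 0 and all f, g ∈ F(X): E(f + C∘g) + E(f − C∘g) ≤ E(f + g) + E(f − g). -/
open scoped ENNReal NNReal

noncomputable section

/-- The `ℓ^q`-norm on `ℝ^d`, for `q ∈ [1,∞]`. -/
noncomputable def lqNorm (q : ℝ≥0∞) {d : ℕ} (x : Fin d → ℝ) : ℝ :=
  if q = ⊤ then ⨆ i, |x i| else (∑ i, |x i| ^ q.toReal) ^ (1 / q.toReal)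

/-- The generalized `p`-contraction property of Kajino–Shimizu. -/
def GenPContraction {X : Type*} (p : ℝ) (E : (X → ℝ) → ℝ≥0∞) : Prop :=
  ∀ q₁ q₂ : ℝ≥0∞, 1 ≤ q₁ → q₁ ≤ ENNReal.ofReal p → ENNReal.ofReal p ≤ q₂ →
    ∀ (d₁ d₂ : ℕ) (T : (Fin d₁ → ℝ) → Fin d₂ → ℝ), T 0 = 0 →
      (∀ x y : Fin d₁ → ℝ, lqNorm q₂ (T x - T y) ≤ lqNorm q₁ (x - y)) →
      ∀ F : Fin d₁ → X → ℝ, (∀ i, E (F i) ≠ ⊤) →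
        (∀ j, E (fun x => T (fun i => F i x) j) ≠ ⊤) ∧
        lqNorm q₂ (fun j => (E (fun x => T (fun i => F i x) j) ^ (1 / p)).toReal) ≤
          lqNorm q₁ (fun i => (E (F i) ^ (1 / p)).toReal)

lemma convexOn_abs_rpow {p : ℝ} (hp : 1 ≤ p) :
    ConvexOn ℝ Set.univ (fun x : ℝ => |x| ^ p) := by
  refine ⟨convex_univ, fun x _ y _ a b ha hb hab => ?_⟩
  have h0 : (0:ℝ) ≤ p := le_trans zero_le_one hp
  calc |a • x + b • y| ^ p ≤ (a * |x| + b * |y|) ^ p := by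
        apply Real.rpow_le_rpow (abs_nonneg _) ?_ h0
        calc |a • x + b • y| ≤ |a • x| + |b • y| := abs_add_le _ _
          _ = a * |x| + b * |y| := by
            rw [smul_eq_mul, smul_eq_mul, abs_mul, abs_mul,
              abs_of_nonneg ha, abs_of_nonneg hb]
    _ ≤ a * |x| ^ p + b * |y| ^ p := by
        have := (convexOn_rpow hp).2 (Set.mem_Ici.mpr (abs_nonneg x))
          (Set.mem_Ici.mpr (abs_nonneg y)) ha hb hab
        simpa [smul_eq_mul] using this

lemma key_ineq {p : ℝ} (hp : 1 ≤ p) (α β t : ℝ) (ht : |t| ≤ |α - β| / 2) :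
    |(α + β) / 2 + t| ^ p + |(α + β) / 2 - t| ^ p ≤ |α| ^ p + |β| ^ p := by
  set s := (α + β) / 2 with hs
  set m := (α - β) / 2 with hm
  have hmabs : |α - β| / 2 = |m| := by rw [hm, abs_div]; norm_num
  rw [hmabs] at ht
  have hg : ConvexOn ℝ Set.univ (fun t : ℝ => |s + t| ^ p + |s - t| ^ p) := by
    refine ConvexOn.add ?_ ?_
    · have := (convexOn_abs_rpow hp).comp_affineMap (AffineMap.lineMap s (s + 1))
      have he : ((fun x : ℝ => |x| ^ p) ∘ (AffineMap.lineMap s (s + 1)))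
          = fun t : ℝ => |s + t| ^ p := by
        funext t
        simp [AffineMap.lineMap_apply]
        ring_nf
      rw [he] at this
      simpa using this
    · have := (convexOn_abs_rpow hp).comp_affineMap (AffineMap.lineMap s (s - 1))
      have he : ((fun x : ℝ => |x| ^ p) ∘ (AffineMap.lineMap s (s - 1)))
          = fun t : ℝ => |s - t| ^ p := by
        funext t
        simp [AffineMap.lineMap_apply]
        ring_nf
      rw [he] at this
      simpa using this
  have hmem : t ∈ segment ℝ m (-m) := by
    rw [segment_eq_uIcc, Set.mem_uIcc]
    rcases abs_le.mp ht with ⟨h1, h2⟩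
    rcases le_or_gt 0 m with h | h
    · right
      constructor
      · calc -m = -|m| := by rw [abs_of_nonneg h]
          _ ≤ t := h1
      · calc t ≤ |m| := h2
          _ = m := abs_of_nonneg h
    · left
      constructor
      · calc m = -|m| := by rw [abs_of_neg h]; ring
          _ ≤ t := h1
      · calc t ≤ |m| := h2
          _ = -m := abs_of_neg h
  have := hg.le_on_segment (Set.mem_univ m) (Set.mem_univ (-m)) hmem
  have hα : s + m = α := by rw [hs, hm]; ring
  have hβ : s - m = β := by rw [hs, hm]; ring
  have hmax : max (|s + m| ^ p + |s - m| ^ p) (|s + -m| ^ p + |s - -m| ^ p)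
      = |α| ^ p + |β| ^ p := by
    have h1 : s + -m = β := by rw [hs, hm]; ring
    have h2 : s - -m = α := by rw [hs, hm]; ring
    rw [hα, hβ, h1, h2, add_comm (|β| ^ p), max_self]
  calc |s + t| ^ p + |s - t| ^ p
      ≤ max (|s + m| ^ p + |s - m| ^ p) (|s + -m| ^ p + |s - -m| ^ p) := this
    _ = |α| ^ p + |β| ^ p := hmax

lemma toReal_rpow_abs_pow {p : ℝ} (hp0 : p ≠ 0) (x : ℝ≥0∞) :
    |(x ^ (1 / p)).toReal| ^ p = x.toReal := by
  rw [abs_of_nonneg ENNReal.toReal_nonneg, ENNReal.toReal_rpow,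
    ← ENNReal.rpow_mul, one_div_mul_cancel hp0, ENNReal.rpow_one]
/-- **The generalized `p`-contraction property implies compatibility with all normal
contractions** (Lemma 5.4). -/
theorem genPContraction_normal_contractions {X : Type*} [Nonempty X]
    (p : ℝ) (hp : 1 < p) (E : (X → ℝ) → ℝ≥0∞) (hE : GenPContraction p E) :
    ∀ C : ℝ → ℝ, LipschitzWith 1 C → C 0 = 0 → Operates C E := by
  intro C hC hC0 f g
  have hp0 : (0:ℝ) < p := lt_trans one_pos hp
  set q := ENNReal.ofReal p with hq
  have hq_ne : q ≠ ⊤ := ENNReal.ofReal_ne_top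
  have hqt : q.toReal = p := ENNReal.toReal_ofReal hp0.le
  by_cases h1 : E (f + g) = ⊤
  · rw [h1, top_add]; exact le_top
  by_cases h2 : E (f - g) = ⊤
  · rw [h2, add_top]; exact le_top
  set T : (Fin 2 → ℝ) → Fin 2 → ℝ := fun v =>
    ![(v 0 + v 1) / 2 + C ((v 0 - v 1) / 2), (v 0 + v 1) / 2 - C ((v 0 - v 1) / 2)] with hT
  set F : Fin 2 → X → ℝ := ![f + g, f - g] with hF
  have hT0 : T 0 = 0 := by
    funext j
    fin_cases j <;> simp [hT, hC0]
  have hLip : ∀ x y : Fin 2 → ℝ, lqNorm q (T x - T y) ≤ lqNorm q (x - y) := by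
    intro x y
    simp only [lqNorm, if_neg hq_ne, hqt]
    have hsum : ∑ i, |(T x - T y) i| ^ p ≤ ∑ i, |(x - y) i| ^ p := by
      rw [Fin.sum_univ_two, Fin.sum_univ_two]
      set α := x 0 - y 0 with hα
      set β := x 1 - y 1 with hβ
      set t := C ((x 0 - x 1) / 2) - C ((y 0 - y 1) / 2) with hts
      have ht : |t| ≤ |α - β| / 2 := by
        have := hC.dist_le_mul ((x 0 - x 1) / 2) ((y 0 - y 1) / 2)
        rw [Real.dist_eq, Real.dist_eq] at this
        have he : (x 0 - x 1) / 2 - (y 0 - y 1) / 2 = (α - β) / 2 := by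
          rw [hα, hβ]; ring
        rw [he] at this
        calc |t| ≤ 1 * |(α - β) / 2| := this
          _ = |α - β| / 2 := by rw [one_mul, abs_div]; norm_num
      have e0 : (T x - T y) 0 = (α + β) / 2 + t := by
        simp only [Pi.sub_apply, hT, Matrix.cons_val_zero]
        rw [hα, hβ, hts]; ring
      have e1 : (T x - T y) 1 = (α + β) / 2 - t := by
        simp only [Pi.sub_apply, hT, Matrix.cons_val_one, Matrix.head_cons, Matrix.cons_val_zero]
        rw [hα, hβ, hts]; ring
      have e2 : (x - y) 0 = α := rfl
      have e3 : (x - y) 1 = β := rfl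
      rw [e0, e1, e2, e3]
      exact key_ineq hp.le α β t ht
    apply Real.rpow_le_rpow ?_ hsum (by positivity)
    apply Finset.sum_nonneg
    intro i _
    positivity
  have hFfin : ∀ i, E (F i) ≠ ⊤ := by
    intro i
    fin_cases i
    · simpa [hF] using h1
    · simpa [hF] using h2
  obtain ⟨hfin, hle⟩ := hE q q (ENNReal.one_le_ofReal.mpr hp.le) le_rfl le_rfl 2 2 T hT0 hLip F hFfin
  have hTF0 : (fun x => T (fun i => F i x) 0) = f + C ∘ g := by
    funext x
    simp only [hT, hF, Matrix.cons_val_zero, Matrix.cons_val_one, Matrix.head_cons,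
      Pi.add_apply, Pi.sub_apply, Function.comp_apply]
    have h3 : (f x + g x - (f x - g x)) / 2 = g x := by ring
    rw [h3]; ring
  have hTF1 : (fun x => T (fun i => F i x) 1) = f - C ∘ g := by
    funext x
    simp only [hT, hF, Matrix.cons_val_zero, Matrix.cons_val_one, Matrix.head_cons,
      Pi.add_apply, Pi.sub_apply, Function.comp_apply]
    have h3 : (f x + g x - (f x - g x)) / 2 = g x := by ring
    rw [h3]; ring
  have hfin0 : E (f + C ∘ g) ≠ ⊤ := by rw [← hTF0]; exact hfin 0
  have hfin1 : E (f - C ∘ g) ≠ ⊤ := by rw [← hTF1]; exact hfin 1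
  simp only [lqNorm, if_neg hq_ne, hqt] at hle
  have hsum2 := (Real.rpow_le_rpow_iff (by positivity) (by positivity)
    (by positivity : (0:ℝ) < 1 / p)).mp hle
  rw [Fin.sum_univ_two, Fin.sum_univ_two] at hsum2
  rw [hTF0, hTF1] at hsum2
  have hpne : p ≠ 0 := ne_of_gt hp0
  rw [toReal_rpow_abs_pow hpne, toReal_rpow_abs_pow hpne, toReal_rpow_abs_pow hpne,
    toReal_rpow_abs_pow hpne] at hsum2
  have hF0 : F 0 = f + g := rfl
  have hF1 : F 1 = f - g := rfl
  rw [hF0, hF1] at hsum2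
  rw [← ENNReal.toReal_add hfin0 hfin1, ← ENNReal.toReal_add h1 h2] at hsum2
  exact (ENNReal.toReal_le_toReal (ENNReal.add_ne_top.mpr ⟨hfin0, hfin1⟩)
    (ENNReal.add_ne_top.mpr ⟨h1, h2⟩)).mp hsum2
end
end
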